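/- arXiv:nlin/0406035 — 13 statements merged into one kernel-verified Lean document; each statement's English description precedes it below -/
import Mathlib

section
/- Let α ∈ ℂ and let φ, ψ : ℂ → ℂ be entire functions satisfying ψ''(x) = (2x − 2ψ(x)φ(x))·ψ(x) and φ''(x) = (2x − 2ψ(x)φ(x))·φ(x) for all x ∈ ℂ, together with φ'(x)ψ(x) − φ(x)ψ'(x) = 2α for all x ∈ ℂ. Assume φ(x) ≠ 0 for all x ∈ ℂ. Then the function u₀ := φ'/φ satisfies the Painlevé II equation with parameter α: u₀''(x) = 2u₀(x)³ − 4x·u₀(x) + 4(α + 1/2) for all x ∈ ℂ. -/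
/-!
Writing `u = φ'/φ` and `p = ψφ`, the equation for `φ''` is the Riccati equation
`u' = 2x − 2p − u²`, and the Wronskian identity `ψ'φ = φ'ψ − 2α` turns `p' = ψ'φ + ψφ'` into
`p' = 2up − 2α`. Differentiating the Riccati equation once more and eliminating `p'`, then `p`,
gives Painlevé II.
-/

theorem hasDerivAt_logDeriv {𝕜 : Type*} [NontriviallyNormedField 𝕜] {f : 𝕜 → 𝕜} {x : 𝕜}
    (hf : DifferentiableAt 𝕜 f x) (hf' : DifferentiableAt 𝕜 (deriv f) x) (hx : f x ≠ 0) :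
    HasDerivAt (logDeriv f) (deriv (deriv f) x / f x - logDeriv f x ^ 2) x := by
  refine (hf'.hasDerivAt.div hf.hasDerivAt hx).congr_deriv ?_
  rw [logDeriv_apply]
  field_simp

theorem deriv_deriv_eq_painleveII_of_hamiltonian {𝕜 : Type*} [NontriviallyNormedField 𝕜]
    {u p : 𝕜 → 𝕜} (α : 𝕜) (hu : ∀ x, HasDerivAt u (2 * x - 2 * p x - u x ^ 2) x)
    (hp : ∀ x, HasDerivAt p (2 * u x * p x - 2 * α) x) (x : 𝕜) :
    deriv (deriv u) x = 2 * u x ^ 3 - 4 * x * u x + 4 * α + 2 := by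
  have hu' : deriv u = fun y => 2 * y - 2 * p y - u y ^ 2 := funext fun y => (hu y).deriv
  have hu'' :=
    (((hasDerivAt_id' x).const_mul 2).fun_sub ((hp x).const_mul 2)).fun_sub ((hu x).fun_pow 2)
  rw [hu', hu''.deriv]
  simp only [Nat.cast_ofNat]
  ring

theorem u0_satisfies_painleveII_general
    (α : ℂ) (φ ψ : ℂ → ℂ) (hφ : Differentiable ℂ φ) (hψ : Differentiable ℂ ψ)
    (hφ'' : ∀ x : ℂ, deriv (deriv φ) x = (2 * x - 2 * ψ x * φ x) * φ x)
    (hW : ∀ x : ℂ, deriv φ x * ψ x - φ x * deriv ψ x = 2 * α)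
    (hφ0 : ∀ x : ℂ, φ x ≠ 0) :
    ∀ x : ℂ,
      deriv (deriv (fun y => deriv φ y / φ y)) x =
        2 * (deriv φ x / φ x) ^ 3 - 4 * x * (deriv φ x / φ x) + 4 * (α + 1 / 2) := by
  have riccati (x : ℂ) :
      HasDerivAt (logDeriv φ) (2 * x - 2 * (ψ x * φ x) - logDeriv φ x ^ 2) x := by
    refine (hasDerivAt_logDeriv (hφ x) (hφ.deriv x) (hφ0 x)).congr_deriv ?_
    rw [hφ'' x]
    field_simp [hφ0 x]
  have hamiltonian (x : ℂ) :
      HasDerivAt (fun y => ψ y * φ y) (2 * logDeriv φ x * (ψ x * φ x) - 2 * α) x := by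
    refine ((hψ x).hasDerivAt.mul (hφ x).hasDerivAt).congr_deriv ?_
    rw [logDeriv_apply]
    field_simp [hφ0 x]
    linear_combination -hW x
  intro x
  calc deriv (deriv (logDeriv φ)) x
      = 2 * logDeriv φ x ^ 3 - 4 * x * logDeriv φ x + 4 * α + 2 :=
        deriv_deriv_eq_painleveII_of_hamiltonian α riccati hamiltonian x
    _ = _ := by rw [logDeriv_apply]; ring

/-- **Proposition 2.2 (i).** If entire functions `φ, ψ` satisfy
`ψ''/ψ = φ''/φ = −2ψφ + 2x` and `φ'ψ − φψ' = 2α`, with `φ` nowhere vanishing,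
then `u₀ = (log φ)' = φ'/φ` satisfies Painlevé II with parameter `α`:
`u₀'' = 2u₀³ − 4xu₀ + 4(α + 1/2)`. -/
theorem u0_satisfies_painleveII
    (α : ℂ) (φ ψ : ℂ → ℂ) (hφ : Differentiable ℂ φ) (hψ : Differentiable ℂ ψ)
    (hψ'' : ∀ x : ℂ, deriv (deriv ψ) x = (2 * x - 2 * ψ x * φ x) * ψ x)
    (hφ'' : ∀ x : ℂ, deriv (deriv φ) x = (2 * x - 2 * ψ x * φ x) * φ x)
    (hW : ∀ x : ℂ, deriv φ x * ψ x - φ x * deriv ψ x = 2 * α)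
    (hφ0 : ∀ x : ℂ, φ x ≠ 0) :
    ∀ x : ℂ,
      deriv (deriv (fun y => deriv φ y / φ y)) x =
        2 * (deriv φ x / φ x) ^ 3 - 4 * x * (deriv φ x / φ x) + 4 * (α + 1 / 2) :=
  u0_satisfies_painleveII_general α φ ψ hφ hψ hφ'' hW hφ0
end

section
/- Let φ, ψ : ℂ → ℂ be entire functions and define a_n, b_n : ℂ → ℂ by a_0 = φ, a_n = a_{n-1}' + ψ·(∑_{i+j=n-2, i,j≥0} a_i a_j), and b_0 = ψ, b_n = b_{n-1}' + φ·(∑_{i+j=n-2, i,j≥0} b_i b_j) for n ≥ 1. Let R be the commutative ring of entire functions ℂ → ℂ (pointwise operations), and in the formal power series ring R[[s]] (where s plays the role of t^{-1}) set F = ∑_{n≥0} a_n s^n and G = ∑_{n≥0} b_n s^n, with ∂_x acting coefficientwise (∂_x F = ∑ a_n' s^n). Then the Riccati equations hold as identities in R[[s]]: s·∂_x F = −ψ·s²·F² + F − φ, and s·∂_x G = −φ·s²·G² + G − ψ. (Equivalently, multiplying by t² = s^{-2}: t·F_x = −ψF² + t²F − t²φ and t·G_x = −φG² + t²G − t²ψ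 as formal series in t^{-1}.) -/
/-!
Comparing coefficients of `s^(n+1)`, the Riccati equation `s D F = -ψ s² F² + F - φ` says exactly
`a (n+1) = D (a n) + ψ [s^(n-1)] F²`, and the Cauchy product `[s^(n-1)] F² = ∑_{i+j=n-1} a_i a_j`
is the convolution in the recurrence. Nothing about `D` beyond its action on the coefficients is
used, so the identity holds over any commutative ring.
-/

open PowerSeries Finset

namespace PowerSeries

variable {R : Type*} [CommRing R]

theorem coeff_X_mul_mk_sq (a : ℕ → R) (n : ℕ) :
    coeff n (X * mk a ^ 2) = ∑ k ∈ range n, a k * a (n - 1 - k) := by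
  cases n with
  | zero => simp
  | succ m =>
    rw [coeff_succ_X_mul, sq, coeff_mul, Nat.sum_antidiagonal_eq_sum_range_succ_mk]
    simp only [coeff_mk, Nat.add_sub_cancel]

theorem X_mul_mk_eq_riccati (D : R → R) (φ ψ : R) (a : ℕ → R) (h0 : a 0 = φ)
    (hsucc : ∀ n, a (n + 1) = D (a n) + ψ * ∑ k ∈ range n, a k * a (n - 1 - k)) :
    X * mk (fun n => D (a n)) = -(C ψ) * X ^ 2 * mk a ^ 2 + mk a - C φ := by
  have hrhs : -(C ψ) * X ^ 2 * mk a ^ 2 + mk a - C φ =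
      X * (-(C ψ) * (X * mk a ^ 2)) + mk a - C φ := by
    ring
  ext n
  rw [hrhs]
  cases n with
  | zero => simp [h0]
  | succ n =>
    rw [map_sub, map_add, coeff_succ_X_mul, coeff_succ_X_mul, neg_mul, map_neg, coeff_C_mul,
      coeff_X_mul_mk_sq, coeff_mk, coeff_mk, coeff_C, if_neg n.succ_ne_zero, hsucc]
    ring

end PowerSeries

theorem generating_functions_riccati_x_general
    (φ ψ : ℂ → ℂ)
    (a b : ℕ → ℂ → ℂ)
    (ha0 : a 0 = φ)
    (ha : ∀ n : ℕ, a (n + 1) =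
      deriv (a n) + fun x => ψ x * ∑ k ∈ Finset.range n, a k x * a (n - 1 - k) x)
    (hb0 : b 0 = ψ)
    (hb : ∀ n : ℕ, b (n + 1) =
      deriv (b n) + fun x => φ x * ∑ k ∈ Finset.range n, b k x * b (n - 1 - k) x)
    (F G Fx Gx : PowerSeries (ℂ → ℂ))
    (hF : F = PowerSeries.mk fun n => a n)
    (hG : G = PowerSeries.mk fun n => b n)
    (hFx : Fx = PowerSeries.mk fun n => deriv (a n))
    (hGx : Gx = PowerSeries.mk fun n => deriv (b n)) :
    PowerSeries.X * Fx =
        -(PowerSeries.C ψ) * PowerSeries.X ^ 2 * F ^ 2 + F - PowerSeries.C φ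
      ∧
    PowerSeries.X * Gx =
        -(PowerSeries.C φ) * PowerSeries.X ^ 2 * G ^ 2 + G - PowerSeries.C ψ := by
  have pointwise_eq (χ : ℂ → ℂ) (c : ℕ → ℂ → ℂ) (n : ℕ) :
      (fun x => χ x * ∑ k ∈ range n, c k x * c (n - 1 - k) x) =
        χ * ∑ k ∈ range n, c k * c (n - 1 - k) := by
    ext x
    simp [Finset.sum_apply]
  subst hF hG hFx hGx
  exact ⟨X_mul_mk_eq_riccati deriv φ ψ a ha0 fun n => (ha n).trans (by rw [pointwise_eq]),
    X_mul_mk_eq_riccati deriv ψ φ b hb0 fun n => (hb n).trans (by rw [pointwise_eq])⟩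

/-- **Proposition 2.3.** The generating functions `F = ∑ a_n s^n` and `G = ∑ b_n s^n`
(with `s = t^{-1}`) of the entries of the Hankel determinant formula formally satisfy
the Riccati equations `s ∂ₓF = −ψ s² F² + F − φ` and `s ∂ₓG = −φ s² G² + G − ψ`,
as identities in the formal power series ring over the ring of entire functions
(realized here inside `(ℂ → ℂ)⟦X⟧` with pointwise operations on coefficients). -/
theorem generating_functions_riccati_x
    (φ ψ : ℂ → ℂ) (hφ : Differentiable ℂ φ) (hψ : Differentiable ℂ ψ)
    (a b : ℕ → ℂ → ℂ)
    (ha0 : a 0 = φ)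
    (ha : ∀ n : ℕ, a (n + 1) =
      deriv (a n) + fun x => ψ x * ∑ k ∈ Finset.range n, a k x * a (n - 1 - k) x)
    (hb0 : b 0 = ψ)
    (hb : ∀ n : ℕ, b (n + 1) =
      deriv (b n) + fun x => φ x * ∑ k ∈ Finset.range n, b k x * b (n - 1 - k) x)
    (F G Fx Gx : PowerSeries (ℂ → ℂ))
    (hF : F = PowerSeries.mk fun n => a n)
    (hG : G = PowerSeries.mk fun n => b n)
    (hFx : Fx = PowerSeries.mk fun n => deriv (a n))
    (hGx : Gx = PowerSeries.mk fun n => deriv (b n)) :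
    PowerSeries.X * Fx =
        -(PowerSeries.C ψ) * PowerSeries.X ^ 2 * F ^ 2 + F - PowerSeries.C φ
      ∧
    PowerSeries.X * Gx =
        -(PowerSeries.C φ) * PowerSeries.X ^ 2 * G ^ 2 + G - PowerSeries.C ψ :=
  generating_functions_riccati_x_general φ ψ a b ha0 ha hb0 hb F G Fx Gx hF hG hFx hGx
end

section
/- Let α ∈ ℂ and let φ, ψ : ℂ → ℂ be entire functions satisfying ψ''(x) = (2x − 2ψ(x)φ(x))·ψ(x), φ''(x) = (2x − 2ψ(x)φ(x))·φ(x), and φ'(x)ψ(x) − φ(x)ψ'(x) = 2α for all x ∈ ℂ. Define a_n, b_n by a_0 = φ, a_n = a_{n-1}' + ψ·(∑_{i+j=n-2, i,j≥0} a_i a_j), b_0 = ψ, b_n = b_{n-1}' + φ·(∑_{i+j=n-2, i,j≥0} b_i b_j). Then the generating functions formally satisfy the Riccati equation in t, 2t F_t = −(ψ' − tψ)F² + ((ψ''/ψ)t + 2 − t³)F + t²(φ' + tφ), in the following coefficientwise sense: ψ·a_2 = ψ²φ² + ψ''·φ, and for every n ≥ 0, ψ·a_{n+3} = ψ²·(∑_{i+j=n+1}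 a_i a_j) − ψψ'·(∑_{i+j=n} a_i a_j) + ψ''·a_{n+1} + 2(n+1)·ψ·a_n; symmetrically, φ·b_2 = φ²ψ² + φ''·ψ, and for every n ≥ 0, φ·b_{n+3} = φ²·(∑_{i+j=n+1} b_i b_j) − φφ'·(∑_{i+j=n} b_i b_j) + φ''·b_{n+1} + 2(n+1)·φ·b_n. -/
/-!
Put `s = 1/t` and let `F = ∑ aₙ sⁿ`, a power series whose coefficients are entire functions of
`x`. The recursion for `aₙ` says exactly that `F` satisfies the Riccati equation in `x`,
`F = φ + s F_x + ψ s² F²`. Multiplying the `t`-Riccati equation by `ψ s³` turns it into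
`E = 0`, where
`E = F - φ - s φ' - s² (u F + ψ F² + s (2 (s F)_s - ψ' F²))` and `u = ψ''/ψ = φ''/φ`.
Differentiating `E` in `x` and eliminating `F_x` and `F_xs` with the `x`-Riccati equation and its
`s`-derivative gives `E = s (E_x + 2 ψ s F E)`; comparing coefficients of `sⁿ`, this forces
`E = 0` by induction on `n`. Only `ψ'' = u ψ`, `φ'' = u φ` and `u' = 2 - 2 (ψ φ)'` enter, so the
argument runs in any differential ring; the entire functions form one.
-/

open Finset PowerSeries

theorem PowerSeries.coeff_mk_sq {R : Type*} [CommRing R] (a : ℕ → R) (n : ℕ) :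
    coeff n (mk a ^ 2) = ∑ k ∈ range (n + 1), a k * a (n - k) := by
  rw [sq, coeff_mul, Nat.sum_antidiagonal_eq_sum_range_succ_mk]
  simp only [coeff_mk]

namespace Derivation

@[simp]
theorem map_ofNat {R A M : Type*} [CommSemiring R] [CommSemiring A] [AddCommMonoid M]
    [Algebra R A] [Module A M] [Module R M] (D : Derivation R A M) (n : ℕ) [n.AtLeastTwo] :
    D (ofNat(n) : A) = 0 :=
  D.map_natCast n

variable {R : Type*} [CommRing R] (D : Derivation ℤ R R)

noncomputable def mapPowerSeries : Derivation ℤ R⟦X⟧ R⟦X⟧ :=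
  Derivation.mk'
    { toFun := fun f => PowerSeries.mk fun n => D (coeff n f)
      map_add' := fun f g => by ext n; simp
      map_smul' := fun k f => by
        ext n
        simp only [RingHom.id_apply, coeff_mk, LinearMap.map_smul_of_tower, map_zsmul] }
    fun f g => by
      ext n
      simp only [LinearMap.coe_mk, AddHom.coe_mk, smul_eq_mul, map_add, coeff_mk, coeff_mul,
        map_sum, leibniz, sum_add_distrib]
      rw [← Nat.sum_antidiagonal_swap (f := fun p => coeff p.1 g * D (coeff p.2 f))]
      rfl

@[simp]
theorem coeff_mapPowerSeries (f : R⟦X⟧) (n : ℕ) :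
    coeff n (D.mapPowerSeries f) = D (coeff n f) := by
  simp [mapPowerSeries]

@[simp]
theorem mapPowerSeries_C (r : R) : D.mapPowerSeries (C r) = C (D r) := by
  ext n
  rw [coeff_mapPowerSeries, coeff_C, coeff_C]
  split_ifs <;> simp

@[simp]
theorem mapPowerSeries_X : D.mapPowerSeries (X : R⟦X⟧) = 0 := by
  ext n
  rw [coeff_mapPowerSeries, coeff_X]
  split_ifs <;> simp

theorem mapPowerSeries_derivative (f : R⟦X⟧) :
    D.mapPowerSeries (d⁄dX R f) = d⁄dX R (D.mapPowerSeries f) := by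
  ext n
  simp [coeff_derivative, leibniz, mul_comm]

theorem eq_zero_of_eq_X_mul_mapPowerSeries_add {E H : R⟦X⟧}
    (hE : E = X * (D.mapPowerSeries E + H * E)) : E = 0 := by
  ext n
  induction n using Nat.strong_induction_on with
  | _ n ih =>
    rw [hE]
    cases n with
    | zero => simp
    | succ n =>
      rw [coeff_succ_X_mul, map_add, coeff_mapPowerSeries, ih n n.lt_succ_self, coeff_mul]
      simp only [map_zero, zero_add]
      refine sum_eq_zero fun p hp => ?_
      rw [ih p.2 (by have := mem_antidiagonal.mp hp; omega), map_zero, mul_zero]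

variable {D} {φ ψ u : R}

theorem riccati_x_of_recursion {a : ℕ → R} (ha0 : a 0 = φ)
    (ha : ∀ n, a (n + 1) = D (a n) + ψ * ∑ k ∈ range n, a k * a (n - 1 - k)) :
    PowerSeries.mk a =
      C φ + X * D.mapPowerSeries (PowerSeries.mk a) + C ψ * X ^ 2 * PowerSeries.mk a ^ 2 := by
  ext (_ | _ | n) <;>
    simp only [coeff_mk, map_add, coeff_C, coeff_zero_X_mul, coeff_succ_X_mul, mul_assoc,
      coeff_C_mul, coeff_X_pow_mul', coeff_mapPowerSeries, coeff_mk_sq] <;>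
    simp [ha0, ha]

theorem riccati_t_of_riccati_x (hφ : D (D φ) = u * φ) (hψ : D (D ψ) = u * ψ)
    (hu : D u = 2 - 2 * (D ψ * φ + ψ * D φ)) {F : R⟦X⟧}
    (hF : F = C φ + X * D.mapPowerSeries F + C ψ * X ^ 2 * F ^ 2) :
    F = C φ + X * C (D φ)
      + X ^ 2 * (C u * F + C ψ * F ^ 2 + X * (2 * d⁄dX R (X * F) - C (D ψ) * F ^ 2)) := by
  have hFs := congrArg (d⁄dX R) hF
  simp only [map_add, leibniz, leibniz_pow, derivative_C, derivative_X, smul_eq_mul] at hFs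
  rw [← sub_eq_zero]
  refine D.eq_zero_of_eq_X_mul_mapPowerSeries_add (H := 2 * C ψ * X * F) ?_
  simp only [map_add, map_sub, leibniz, leibniz_pow, mapPowerSeries_C, mapPowerSeries_X,
    mapPowerSeries_derivative, derivative_X, smul_eq_mul, hφ, hψ, hu, map_mul, map_ofNat,
    _root_.map_ofNat, map_one_eq_zero]
  -- `hFs` removes `X⁵ F_xs`; the multiplier of `hF` is then the coefficient of `X F_x`.
  linear_combination (1 - C u * X ^ 2 - 2 * C ψ * X ^ 2 * F + 2 * C (D ψ) * X ^ 3 * F) * hF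
    - 2 * X ^ 4 * hFs

theorem riccati_t_coeff (hφ : D (D φ) = u * φ) (hψ : D (D ψ) = u * ψ)
    (hu : D u = 2 - 2 * (D ψ * φ + ψ * D φ)) {a : ℕ → R} (ha0 : a 0 = φ)
    (ha : ∀ n, a (n + 1) = D (a n) + ψ * ∑ k ∈ range n, a k * a (n - 1 - k)) :
    a 2 = u * φ + ψ * φ ^ 2 ∧
      ∀ n : ℕ, a (n + 3) = u * a (n + 1) + ψ * ∑ k ∈ range (n + 2), a k * a (n + 1 - k)
        - D ψ * ∑ k ∈ range (n + 1), a k * a (n - k) + 2 * (n + 1) * a n := by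
  have h := riccati_t_of_riccati_x hφ hψ hu (riccati_x_of_recursion ha0 ha)
  constructor
  · have h2 := congrArg (coeff (0 + 2)) h
    simp only [map_add, coeff_C, coeff_succ_X_mul, coeff_X_pow_mul, coeff_C_mul, coeff_zero_X_mul,
      coeff_mk, coeff_mk_sq] at h2
    simp only [OfNat.ofNat_ne_zero, one_ne_zero, if_false, zero_add, add_zero, range_one,
      sum_singleton, zero_tsub, ha0] at h2
    rw [h2]
    ring
  · intro n
    have h3 := congrArg (coeff (n + 1 + 2)) h
    simp only [map_add, map_sub, coeff_C, coeff_succ_X_mul, coeff_X_pow_mul, coeff_C_mul,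
      coeff_mk, coeff_mk_sq, two_mul, coeff_derivative] at h3
    rw [if_neg (by omega), if_neg (by omega)] at h3
    linear_combination h3

end Derivation

def entireFunctions : Subring (ℂ → ℂ) where
  carrier := {f | Differentiable ℂ f}
  mul_mem' := Differentiable.mul
  one_mem' := differentiable_const 1
  add_mem' := Differentiable.add
  zero_mem' := differentiable_const 0
  neg_mem' := Differentiable.neg

namespace entireFunctions

noncomputable def deriv : Derivation ℤ entireFunctions entireFunctions :=
  Derivation.mk'
    (AddMonoidHom.toIntLinearMap
      { toFun := fun f => ⟨_root_.deriv f, Differentiable.deriv f.2⟩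
        map_zero' := Subtype.ext (deriv_const' 0)
        map_add' := fun f g => Subtype.ext (funext fun x => deriv_add (f.2 x) (g.2 x)) })
    fun f g => Subtype.ext <| funext fun x => by
      show _root_.deriv (f * g : ℂ → ℂ) x =
        (f : ℂ → ℂ) x * _root_.deriv g x + (g : ℂ → ℂ) x * _root_.deriv f x
      rw [deriv_mul (f.2 x) (g.2 x)]
      ring

@[simp]
theorem coe_ofNat (n : ℕ) [n.AtLeastTwo] : ((ofNat(n) : entireFunctions) : ℂ → ℂ) = ofNat(n) :=
  rfl

@[simp]
theorem coe_deriv (f : entireFunctions) : (deriv f : ℂ → ℂ) = _root_.deriv f := rfl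

end entireFunctions

section Entire

variable {φ ψ : ℂ → ℂ} {a : ℕ → ℂ → ℂ}

theorem differentiable_of_riccati_recursion (hφ : Differentiable ℂ φ) (hψ : Differentiable ℂ ψ)
    (ha0 : a 0 = φ)
    (ha : ∀ n, a (n + 1) = deriv (a n) + fun x => ψ x * ∑ k ∈ range n, a k x * a (n - 1 - k) x)
    (n : ℕ) : Differentiable ℂ (a n) := by
  induction n using Nat.strong_induction_on with
  | _ n ih =>
    match n with
    | 0 => rwa [ha0]
    | n + 1 =>
      rw [ha n]
      refine (ih n n.lt_succ_self).deriv.add (hψ.mul (Differentiable.fun_sum fun k hk => ?_))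
      have := mem_range.mp hk
      exact (ih k (by omega)).mul (ih (n - 1 - k) (by omega))

theorem riccati_t_coeff_of_entire (hφ : Differentiable ℂ φ) (hψ : Differentiable ℂ ψ)
    (hψ'' : ∀ x, deriv (deriv ψ) x = (2 * x - 2 * ψ x * φ x) * ψ x)
    (hφ'' : ∀ x, deriv (deriv φ) x = (2 * x - 2 * ψ x * φ x) * φ x)
    (ha0 : a 0 = φ)
    (ha : ∀ n, a (n + 1) = deriv (a n) + fun x => ψ x * ∑ k ∈ range n, a k x * a (n - 1 - k) x) :
    (∀ x, a 2 x = (2 * x - 2 * ψ x * φ x) * φ x + ψ x * φ x ^ 2) ∧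
      ∀ (n : ℕ) (x : ℂ), a (n + 3) x = (2 * x - 2 * ψ x * φ x) * a (n + 1) x
        + ψ x * ∑ k ∈ range (n + 2), a k x * a (n + 1 - k) x
        - deriv ψ x * ∑ k ∈ range (n + 1), a k x * a (n - k) x + 2 * (n + 1) * a n x := by
  let A : ℕ → entireFunctions := fun n => ⟨a n, differentiable_of_riccati_recursion hφ hψ ha0 ha n⟩
  let Φ : entireFunctions := ⟨φ, hφ⟩
  let Ψ : entireFunctions := ⟨ψ, hψ⟩
  let Z : entireFunctions := ⟨id, differentiable_id⟩
  let U : entireFunctions := 2 * Z - 2 * Ψ * Φ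
  have hZ : entireFunctions.deriv Z = 1 := Subtype.ext (funext deriv_id)
  have hU : entireFunctions.deriv U =
      2 - 2 * (entireFunctions.deriv Ψ * Φ + Ψ * entireFunctions.deriv Φ) := by
    simp only [U, map_sub, Derivation.leibniz, hZ, Derivation.map_ofNat, smul_eq_mul]
    ring
  have hΦ : entireFunctions.deriv (entireFunctions.deriv Φ) = U * Φ := by
    ext x
    simp [U, Φ, Ψ, Z, hφ'']
  have hΨ : entireFunctions.deriv (entireFunctions.deriv Ψ) = U * Ψ := by
    ext x
    simp [U, Φ, Ψ, Z, hψ'']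
  have hA : ∀ n, A (n + 1) =
      entireFunctions.deriv (A n) + Ψ * ∑ k ∈ range n, A k * A (n - 1 - k) := fun n => by
    ext x
    simp [A, Ψ, ha n]
  obtain ⟨h2, h3⟩ := Derivation.riccati_t_coeff hΦ hΨ hU (Subtype.ext ha0 : A 0 = Φ) hA
  refine ⟨fun x => ?_, fun n x => ?_⟩
  · simpa [A, U, Φ, Ψ, Z] using congrFun (congrArg Subtype.val h2) x
  · simpa [A, U, Φ, Ψ, Z] using congrFun (congrArg Subtype.val (h3 n)) x

end Entire

theorem riccati_t_coefficientwise_general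
    (φ ψ : ℂ → ℂ) (hφ : Differentiable ℂ φ) (hψ : Differentiable ℂ ψ)
    (hψ'' : ∀ x : ℂ, deriv (deriv ψ) x = (2 * x - 2 * ψ x * φ x) * ψ x)
    (hφ'' : ∀ x : ℂ, deriv (deriv φ) x = (2 * x - 2 * ψ x * φ x) * φ x)
    (a b : ℕ → ℂ → ℂ)
    (ha0 : a 0 = φ)
    (ha : ∀ n : ℕ, a (n + 1) =
      deriv (a n) + fun x => ψ x * ∑ k ∈ Finset.range n, a k x * a (n - 1 - k) x)
    (hb0 : b 0 = ψ)
    (hb : ∀ n : ℕ, b (n + 1) =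
      deriv (b n) + fun x => φ x * ∑ k ∈ Finset.range n, b k x * b (n - 1 - k) x) :
    (∀ x : ℂ, ψ x * a 2 x = (ψ x) ^ 2 * (φ x) ^ 2 + deriv (deriv ψ) x * φ x)
      ∧
    (∀ (n : ℕ) (x : ℂ),
      ψ x * a (n + 3) x =
        (ψ x) ^ 2 * (∑ k ∈ Finset.range (n + 2), a k x * a (n + 1 - k) x)
          - ψ x * deriv ψ x * (∑ k ∈ Finset.range (n + 1), a k x * a (n - k) x)
          + deriv (deriv ψ) x * a (n + 1) x
          + 2 * ((n : ℂ) + 1) * ψ x * a n x)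
      ∧
    (∀ x : ℂ, φ x * b 2 x = (φ x) ^ 2 * (ψ x) ^ 2 + deriv (deriv φ) x * ψ x)
      ∧
    (∀ (n : ℕ) (x : ℂ),
      φ x * b (n + 3) x =
        (φ x) ^ 2 * (∑ k ∈ Finset.range (n + 2), b k x * b (n + 1 - k) x)
          - φ x * deriv φ x * (∑ k ∈ Finset.range (n + 1), b k x * b (n - k) x)
          + deriv (deriv φ) x * b (n + 1) x
          + 2 * ((n : ℂ) + 1) * φ x * b n x) := by
  obtain ⟨ha2, ha3⟩ := riccati_t_coeff_of_entire hφ hψ hψ'' hφ'' ha0 ha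
  obtain ⟨hb2, hb3⟩ := riccati_t_coeff_of_entire hψ hφ (fun x => by rw [hφ'' x]; ring)
    (fun x => by rw [hψ'' x]; ring) hb0 hb
  refine ⟨fun x => ?_, fun n x => ?_, fun x => ?_, fun n x => ?_⟩
  · rw [ha2, hψ'']; ring
  · rw [ha3, hψ'']; ring
  · rw [hb2, hφ'']; ring
  · rw [hb3, hφ'']; ring

/-- **Proposition 2.6, coefficientwise form.** Under the conditions
`ψ''/ψ = φ''/φ = −2ψφ + 2x` and `φ'ψ − φψ' = 2α`, the generating functions
`F = ∑ a_n t^{-n}`, `G = ∑ b_n t^{-n}` formally satisfy the Riccati equations in `t`,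
`2t F_t = −(ψ' − tψ)F² + ((ψ''/ψ)t + 2 − t³)F + t²(φ' + tφ)` (and symmetrically for `G`),
expressed here as the coefficient identities of each power `t^{-n}` after multiplication
by `ψ` (resp. `φ`). -/
theorem riccati_t_coefficientwise
    (α : ℂ) (φ ψ : ℂ → ℂ) (hφ : Differentiable ℂ φ) (hψ : Differentiable ℂ ψ)
    (hψ'' : ∀ x : ℂ, deriv (deriv ψ) x = (2 * x - 2 * ψ x * φ x) * ψ x)
    (hφ'' : ∀ x : ℂ, deriv (deriv φ) x = (2 * x - 2 * ψ x * φ x) * φ x)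
    (hW : ∀ x : ℂ, deriv φ x * ψ x - φ x * deriv ψ x = 2 * α)
    (a b : ℕ → ℂ → ℂ)
    (ha0 : a 0 = φ)
    (ha : ∀ n : ℕ, a (n + 1) =
      deriv (a n) + fun x => ψ x * ∑ k ∈ Finset.range n, a k x * a (n - 1 - k) x)
    (hb0 : b 0 = ψ)
    (hb : ∀ n : ℕ, b (n + 1) =
      deriv (b n) + fun x => φ x * ∑ k ∈ Finset.range n, b k x * b (n - 1 - k) x) :
    (∀ x : ℂ, ψ x * a 2 x = (ψ x) ^ 2 * (φ x) ^ 2 + deriv (deriv ψ) x * φ x)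
      ∧
    (∀ (n : ℕ) (x : ℂ),
      ψ x * a (n + 3) x =
        (ψ x) ^ 2 * (∑ k ∈ Finset.range (n + 2), a k x * a (n + 1 - k) x)
          - ψ x * deriv ψ x * (∑ k ∈ Finset.range (n + 1), a k x * a (n - k) x)
          + deriv (deriv ψ) x * a (n + 1) x
          + 2 * ((n : ℂ) + 1) * ψ x * a n x)
      ∧
    (∀ x : ℂ, φ x * b 2 x = (φ x) ^ 2 * (ψ x) ^ 2 + deriv (deriv φ) x * ψ x)
      ∧
    (∀ (n : ℕ) (x : ℂ),
      φ x * b (n + 3) x =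
        (φ x) ^ 2 * (∑ k ∈ Finset.range (n + 2), b k x * b (n + 1 - k) x)
          - φ x * deriv φ x * (∑ k ∈ Finset.range (n + 1), b k x * b (n - k) x)
          + deriv (deriv φ) x * b (n + 1) x
          + 2 * ((n : ℂ) + 1) * φ x * b n x) :=
  riccati_t_coefficientwise_general φ ψ hφ hψ hψ'' hφ'' a b ha0 ha hb0 hb
end

section
/- Let α ∈ ℂ and let φ, ψ : ℂ → ℂ be entire functions with ψ nowhere vanishing, satisfying ψ''(x) = (2x − 2ψ(x)φ(x))·ψ(x), φ''(x) = (2x − 2ψ(x)φ(x))·φ(x), and φ'(x)ψ(x) − φ(x)ψ'(x) = 2α for all x ∈ ℂ. Set z := −ψφ and u₋₁ := −ψ'/ψ, and for (x,t) ∈ ℂ² define the 2×2 matrices A(x,t) = [[t²/4 − z(x)/2 − x/2, −(ψ(x)/2)(t + u₋₁(x))], [(1/ψ(x))((u₋₁(x) − t)z(x)/2 + α), −t²/4 + z(x)/2 + x/2]] and B(x,t) = [[−t/2, ψ(x)], [z(x)/ψ(x), t/2]]. Then the zero-curvature (compatibility) equation holds for all (x,t) ∈ ℂ²: ∂A/∂x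 − ∂B/∂t + A·B − B·A = 0. -/
/-- Jimbo–Miwa matrix `A` of the isomonodromic system for Painlevé II. -/
noncomputable def Amat (α : ℂ) (ψ z u : ℂ → ℂ) (x t : ℂ) : Matrix (Fin 2) (Fin 2) ℂ :=
  !![t ^ 2 / 4 - z x / 2 - x / 2, -(ψ x / 2) * (t + u x);
     (1 / ψ x) * ((u x - t) * z x / 2 + α), -t ^ 2 / 4 + z x / 2 + x / 2]

/-- Jimbo–Miwa matrix `B` of the isomonodromic system for Painlevé II. -/
noncomputable def Bmat (ψ z : ℂ → ℂ) (x t : ℂ) : Matrix (Fin 2) (Fin 2) ℂ :=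
  !![-t / 2, ψ x;
     z x / ψ x, t / 2]

set_option maxHeartbeats 2000000 in
/-- **Theorem 2.7 (compatibility, part (i)).** Under the conditions
`ψ''/ψ = φ''/φ = −2ψφ + 2x` and `φ'ψ − φψ' = 2α`, with `z = −ψφ` and `u₋₁ = −ψ'/ψ`,
the matrices `A`, `B` satisfy the zero-curvature equation
`∂A/∂x − ∂B/∂t + [A, B] = 0`. -/
theorem zero_curvature_AB
    (α : ℂ) (φ ψ : ℂ → ℂ) (hφ : Differentiable ℂ φ) (hψ : Differentiable ℂ ψ)
    (hψ0 : ∀ x : ℂ, ψ x ≠ 0)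
    (hψ'' : ∀ x : ℂ, deriv (deriv ψ) x = (2 * x - 2 * ψ x * φ x) * ψ x)
    (hφ'' : ∀ x : ℂ, deriv (deriv φ) x = (2 * x - 2 * ψ x * φ x) * φ x)
    (hW : ∀ x : ℂ, deriv φ x * ψ x - φ x * deriv ψ x = 2 * α)
    (z u : ℂ → ℂ)
    (hz : z = fun x => -(ψ x * φ x))
    (hu : u = fun x => -(deriv ψ x / ψ x)) :
    ∀ x t : ℂ,
      (Matrix.of fun i j : Fin 2 => deriv (fun y => Amat α ψ z u y t i j) x)
        - (Matrix.of fun i j : Fin 2 => deriv (fun s => Bmat ψ z x s i j) t)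
        + Amat α ψ z u x t * Bmat ψ z x t - Bmat ψ z x t * Amat α ψ z u x t = 0 := by
  subst hz hu
  have hψd : Differentiable ℂ (deriv ψ) := by
    have h : AnalyticOnNhd ℂ ψ Set.univ :=
      hψ.differentiableOn.analyticOnNhd isOpen_univ
    exact fun x => (h.deriv x (Set.mem_univ x)).differentiableAt
  intro x t
  have Hψ : HasDerivAt ψ (deriv ψ x) x := hψ.differentiableAt.hasDerivAt
  have Hφ : HasDerivAt φ (deriv φ x) x := hφ.differentiableAt.hasDerivAt
  have Hψ' : HasDerivAt (deriv ψ) (deriv (deriv ψ) x) x := hψd.differentiableAt.hasDerivAt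
  have H1 : HasDerivAt (fun y => t ^ 2 / 4 - -(ψ y * φ y) / 2 - y / 2)
      (0 - -(deriv ψ x * φ x + ψ x * deriv φ x) / 2 - 1 / 2) x :=
    (((hasDerivAt_const x (t ^ 2 / 4)).sub (((Hψ.mul Hφ).neg).div_const 2)).sub
      ((hasDerivAt_id x).div_const 2))
  have H2 : HasDerivAt (fun y => -(ψ y / 2) * (t + -(deriv ψ y / ψ y)))
      ((-(deriv ψ x / 2)) * (t + -(deriv ψ x / ψ x)) +
        (-(ψ x / 2)) * (0 + -((deriv (deriv ψ) x * ψ x - deriv ψ x * deriv ψ x) / ψ x ^ 2))) x :=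
    ((Hψ.div_const 2).neg.mul ((hasDerivAt_const x t).add ((Hψ'.div Hψ (hψ0 x)).neg)))
  have H3 : HasDerivAt (fun y => (1 / ψ y) * ((-(deriv ψ y / ψ y) - t) * -(ψ y * φ y) / 2 + α))
      (((0 * ψ x - 1 * deriv ψ x) / ψ x ^ 2) * ((-(deriv ψ x / ψ x) - t) * -(ψ x * φ x) / 2 + α) +
        (1 / ψ x) * (((-((deriv (deriv ψ) x * ψ x - deriv ψ x * deriv ψ x) / ψ x ^ 2) - 0) *
            -(ψ x * φ x) + (-(deriv ψ x / ψ x) - t) * -(deriv ψ x * φ x + ψ x * deriv φ x)) / 2 + 0)) x :=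
    (((hasDerivAt_const x (1:ℂ)).div Hψ (hψ0 x)).mul
      (((((Hψ'.div Hψ (hψ0 x)).neg.sub (hasDerivAt_const x t)).mul
        ((Hψ.mul Hφ).neg)).div_const 2).add (hasDerivAt_const x α)))
  have H4 : HasDerivAt (fun y => -t ^ 2 / 4 + -(ψ y * φ y) / 2 + y / 2)
      (0 + -(deriv ψ x * φ x + ψ x * deriv φ x) / 2 + 1 / 2) x :=
    (((hasDerivAt_const x (-t ^ 2 / 4)).add (((Hψ.mul Hφ).neg).div_const 2)).add
      ((hasDerivAt_id x).div_const 2))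
  have hG : deriv φ x = (2 * α + φ x * deriv ψ x) / ψ x := by
    rw [eq_div_iff (hψ0 x)]
    linear_combination hW x
  have hB1 : deriv (fun s : ℂ => -s / 2) t = -1 / 2 := by
    simpa using ((hasDerivAt_id t).neg.div_const 2).deriv
  have hB2 : deriv (fun _ : ℂ => ψ x) t = 0 := deriv_const t _
  have hB3 : deriv (fun _ : ℂ => -(ψ x * φ x) / ψ x) t = 0 := deriv_const t _
  have hB4 : deriv (fun s : ℂ => s / 2) t = 1 / 2 := by
    simpa using ((hasDerivAt_id t).div_const 2).deriv
  have hc : ψ x * (ψ x)⁻¹ = 1 := mul_inv_cancel₀ (hψ0 x)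
  ext i j
  fin_cases i <;> fin_cases j <;>
    simp only [Amat, Bmat, Matrix.of_apply, Matrix.mul_apply, Fin.sum_univ_two, Fin.isValue,
      Fin.mk_zero, Fin.mk_one,
      Matrix.cons_val', Matrix.cons_val_zero, Matrix.cons_val_one, Matrix.head_cons,
      Matrix.head_fin_const, Matrix.empty_val', Matrix.cons_val_fin_one, Matrix.sub_apply,
      Matrix.add_apply, Matrix.zero_apply] <;>
    simp only [H1.deriv, H2.deriv, H3.deriv, H4.deriv, hB1, hB2, hB3, hB4, hψ'' x, hG]
  · linear_combination (deriv ψ x * φ x * (-(ψ x * (ψ x)⁻¹) - 1/2)) * hc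
  · linear_combination ((-(deriv ψ x)^2/2 + ψ x^2 * x - ψ x^3 * φ x) * (ψ x)⁻¹
      + deriv ψ x * t/2 + ψ x * x - ψ x^2 * φ x) * hc
  · linear_combination ((deriv ψ x * α - (deriv ψ x)^2 * φ x/2 + ψ x^2 * φ x * x
        - ψ x^3 * φ x^2) * (ψ x)⁻¹^2
      + (-(deriv ψ x * t * φ x)/2 + t * α + ψ x * φ x * x - ψ x^2 * φ x^2) * (ψ x)⁻¹) * hc
  · linear_combination (deriv ψ x * φ x * (ψ x * (ψ x)⁻¹ + 1/2)) * hc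
end

section
/- Let α ∈ ℂ and let ψ, z, u : ℂ → ℂ be entire functions with ψ nowhere vanishing. For (x,t) ∈ ℂ² define A(x,t) = [[t²/4 − z(x)/2 − x/2, −(ψ(x)/2)(t + u(x))], [(1/ψ(x))((u(x) − t)z(x)/2 + α), −t²/4 + z(x)/2 + x/2]] and B(x,t) = [[−t/2, ψ(x)], [z(x)/ψ(x), t/2]]. If the zero-curvature equation ∂A/∂x − ∂B/∂t + A·B − B·A = 0 holds for all (x,t) ∈ ℂ², then for all x ∈ ℂ: z'(x) = −2u(x)z(x) − 2α, u'(x) = u(x)² − 2z(x) − 2x, and u(x) = −ψ'(x)/ψ(x); consequently u satisfies the Painlevé II equation with parameter α − 1: u''(x) = 2u(x)³ − 4x·u(x) + 4(α − 1/2). -/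
/-!
Only the first row of the zero-curvature equation is needed. Its diagonal entry is
`−z'/2 − uz − α = 0`. Its off-diagonal entry is affine in `t`: the `t`-coefficient gives
`ψ' = −uψ` and its constant term then gives `u' = u² − 2z − 2x`. Differentiating the
last equation and substituting the other two yields Painlevé II.
-/

open Matrix

def ZeroCurvature (α : ℂ) (ψ z u : ℂ → ℂ) (x t : ℂ) : Prop :=
  (Matrix.of fun i j : Fin 2 => deriv (fun y => Amat α ψ z u y t i j) x)
    - (Matrix.of fun i j : Fin 2 => deriv (fun s => Bmat ψ z x s i j) t)
    + Amat α ψ z u x t * Bmat ψ z x t - Bmat ψ z x t * Amat α ψ z u x t = 0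

section ZeroCurvature

variable {α : ℂ} {ψ z u : ℂ → ℂ} {x t : ℂ}

theorem hasDerivAt_Amat_zero_zero (hz : DifferentiableAt ℂ z x) :
    HasDerivAt (fun y => Amat α ψ z u y t 0 0) (-(deriv z x) / 2 - 1 / 2) x := by
  simp only [Amat, of_apply, cons_val', cons_val_zero, empty_val', cons_val_fin_one]
  exact (((hasDerivAt_const x (t ^ 2 / 4)).sub (hz.hasDerivAt.div_const 2)).sub
    ((hasDerivAt_id x).div_const 2)).congr_deriv (by ring)

theorem hasDerivAt_Amat_zero_one (hψ : DifferentiableAt ℂ ψ x) (hu : DifferentiableAt ℂ u x) :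
    HasDerivAt (fun y => Amat α ψ z u y t 0 1)
      (-(deriv ψ x / 2) * (t + u x) - ψ x / 2 * deriv u x) x := by
  simp only [Amat, of_apply, cons_val', cons_val_zero, cons_val_one, empty_val',
    cons_val_fin_one]
  exact ((hψ.hasDerivAt.div_const 2).neg.mul
    ((hasDerivAt_const x t).add hu.hasDerivAt)).congr_deriv
      (by simp only [Pi.add_apply, Pi.neg_apply]; ring)

theorem hasDerivAt_Bmat_zero_zero : HasDerivAt (fun s => Bmat ψ z x s 0 0) (-1 / 2) t := by
  simp only [Bmat, of_apply, cons_val', cons_val_zero, empty_val', cons_val_fin_one]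
  exact (hasDerivAt_id t).neg.div_const 2

theorem deriv_Bmat_zero_one : deriv (fun s => Bmat ψ z x s 0 1) t = 0 := by
  simp [Bmat]

theorem deriv_z_of_zeroCurvature (h : ZeroCurvature α ψ z u x t) (hz : DifferentiableAt ℂ z x)
    (hψ0 : ψ x ≠ 0) : deriv z x = -2 * u x * z x - 2 * α := by
  have h00 := congrFun (congrFun h 0) 0
  simp only [Matrix.sub_apply, Matrix.add_apply, of_apply, Matrix.zero_apply, mul_apply,
    Fin.sum_univ_two, (hasDerivAt_Amat_zero_zero hz).deriv, hasDerivAt_Bmat_zero_zero.deriv] at h00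
  simp only [Amat, Bmat, of_apply, cons_val', cons_val_zero, cons_val_one, empty_val',
    cons_val_fin_one] at h00
  field_simp at h00
  linear_combination (-1 / 8 : ℂ) * h00

theorem ZeroCurvature.entry_zero_one (h : ZeroCurvature α ψ z u x t)
    (hψ : DifferentiableAt ℂ ψ x) (hu : DifferentiableAt ℂ u x) :
    deriv ψ x * (t + u x) + ψ x * deriv u x + ψ x * (2 * z x + 2 * x + u x * t) = 0 := by
  have h01 := congrFun (congrFun h 0) 1
  simp only [Matrix.sub_apply, Matrix.add_apply, of_apply, Matrix.zero_apply, mul_apply,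
    Fin.sum_univ_two, (hasDerivAt_Amat_zero_one hψ hu).deriv, deriv_Bmat_zero_one] at h01
  simp only [Amat, Bmat, of_apply, cons_val', cons_val_zero, cons_val_one, empty_val',
    cons_val_fin_one] at h01
  linear_combination -2 * h01

theorem deriv_psi_of_zeroCurvature
    (h₀ : ZeroCurvature α ψ z u x 0) (h₁ : ZeroCurvature α ψ z u x 1)
    (hψ : DifferentiableAt ℂ ψ x) (hu : DifferentiableAt ℂ u x) :
    deriv ψ x = -(u x * ψ x) := by
  linear_combination (h₁.entry_zero_one hψ hu) - (h₀.entry_zero_one hψ hu)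

theorem deriv_u_of_zeroCurvature
    (h₀ : ZeroCurvature α ψ z u x 0) (h₁ : ZeroCurvature α ψ z u x 1)
    (hψ : DifferentiableAt ℂ ψ x) (hu : DifferentiableAt ℂ u x) (hψ0 : ψ x ≠ 0) :
    deriv u x = u x ^ 2 - 2 * z x - 2 * x := by
  refine mul_left_cancel₀ hψ0 ?_
  linear_combination (h₀.entry_zero_one hψ hu) - u x * deriv_psi_of_zeroCurvature h₀ h₁ hψ hu

end ZeroCurvature

theorem deriv_deriv_eq_painleveII {α : ℂ} {z u : ℂ → ℂ} {x : ℂ}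
    (hz : DifferentiableAt ℂ z x) (hu : DifferentiableAt ℂ u x)
    (hz' : deriv z x = -2 * u x * z x - 2 * α)
    (hu' : ∀ y, deriv u y = u y ^ 2 - 2 * z y - 2 * y) :
    deriv (deriv u) x = 2 * u x ^ 3 - 4 * x * u x + 4 * (α - 1 / 2) := by
  have hu'' : HasDerivAt (fun y => u y ^ 2 - 2 * z y - 2 * y)
      (2 * u x * deriv u x - 2 * deriv z x - 2) x :=
    (((hu.hasDerivAt.pow 2).sub (hz.hasDerivAt.const_mul 2)).sub
      ((hasDerivAt_id x).const_mul 2)).congr_deriv (by simp)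
  rw [funext hu', hu''.deriv, hz', hu']
  ring

/-- **Remark 2.8.** If entire `ψ, z, u` (with `ψ` nowhere vanishing) make the
zero-curvature equation `∂A/∂x − ∂B/∂t + [A, B] = 0` hold, then
`z' = −2uz − 2α`, `u' = u² − 2z − 2x`, `u = −ψ'/ψ`, and consequently `u`
satisfies Painlevé II with parameter `α − 1`. -/
theorem zero_curvature_implies_painleveII
    (α : ℂ) (ψ z u : ℂ → ℂ)
    (hψ : Differentiable ℂ ψ) (hz : Differentiable ℂ z) (hu : Differentiable ℂ u)
    (hψ0 : ∀ x : ℂ, ψ x ≠ 0)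
    (hzc : ∀ x t : ℂ,
      (Matrix.of fun i j : Fin 2 => deriv (fun y => Amat α ψ z u y t i j) x)
        - (Matrix.of fun i j : Fin 2 => deriv (fun s => Bmat ψ z x s i j) t)
        + Amat α ψ z u x t * Bmat ψ z x t - Bmat ψ z x t * Amat α ψ z u x t = 0) :
    (∀ x : ℂ, deriv z x = -2 * u x * z x - 2 * α)
      ∧ (∀ x : ℂ, deriv u x = u x ^ 2 - 2 * z x - 2 * x)
      ∧ (∀ x : ℂ, u x = -(deriv ψ x / ψ x))
      ∧ (∀ x : ℂ, deriv (deriv u) x = 2 * u x ^ 3 - 4 * x * u x + 4 * (α - 1 / 2)) := by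
  have hz' (x : ℂ) : deriv z x = -2 * u x * z x - 2 * α :=
    deriv_z_of_zeroCurvature (hzc x 0) (hz x) (hψ0 x)
  have hu' (x : ℂ) : deriv u x = u x ^ 2 - 2 * z x - 2 * x :=
    deriv_u_of_zeroCurvature (hzc x 0) (hzc x 1) (hψ x) (hu x) (hψ0 x)
  refine ⟨hz', hu', fun x => ?_, fun x => deriv_deriv_eq_painleveII (hz x) (hu x) (hz' x) hu'⟩
  rw [deriv_psi_of_zeroCurvature (hzc x 0) (hzc x 1) (hψ x) (hu x), neg_div,
    mul_div_cancel_right₀ _ (hψ0 x), neg_neg]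
end

section
/- Let α ∈ ℂ and let φ, ψ : ℂ → ℂ be entire functions with ψ nowhere vanishing, satisfying ψ''(x) = (2x − 2ψ(x)φ(x))·ψ(x), φ''(x) = (2x − 2ψ(x)φ(x))·φ(x), and φ'(x)ψ(x) − φ(x)ψ'(x) = 2α for all x ∈ ℂ. Set z := −ψφ, u₋₁ := −ψ'/ψ, and let A, B be the matrices A(x,t) = [[t²/4 − z/2 − x/2, −(ψ/2)(t + u₋₁)], [(1/ψ)((u₋₁ − t)z/2 + α), −t²/4 + z/2 + x/2]], B(x,t) = [[−t/2, ψ], [z/ψ, t/2]]. Suppose Y₁, Y₂ : ℂ × ℂ → ℂ are differentiable in (x,t), satisfy ∂Y/∂t = AY and ∂Y/∂x = BY for Y = (Y₁, Y₂)ᵀ, and Y₁ is nowhere zero. Then F(x,t) := t·Y₂(x,t)/Y₁(x,t) satisfies both Riccati equations: t·∂F/∂x = −ψF² + t²F − t²φ, and 2t·∂F/∂t = −(ψ' − tψ)F² + ((ψ''/ψ)t + 2 − t³)F + t²(φ' + tφ), for all (x,t) ∈ ℂ². -/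
section

variable {𝕜 : Type*} [NontriviallyNormedField 𝕜]

theorem HasDerivAt.div_of_linear_system {f g : 𝕜 → 𝕜} {a b c d x : 𝕜}
    (hf : HasDerivAt f (a * f x + b * g x) x) (hg : HasDerivAt g (c * f x + d * g x) x)
    (hf0 : f x ≠ 0) :
    HasDerivAt (fun y => g y / f y) (c + (d - a) * (g x / f x) - b * (g x / f x) ^ 2) x := by
  refine (hg.fun_div hf hf0).congr_deriv ?_
  field_simp
  ring

variable {E F G : Type*} [NormedAddCommGroup E] [NormedSpace 𝕜 E] [NormedAddCommGroup F]
  [NormedSpace 𝕜 F] [NormedAddCommGroup G] [NormedSpace 𝕜 G]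

theorem Differentiable.differentiableAt_curry_left {Y : E → F → G}
    (hY : Differentiable 𝕜 fun p : E × F => Y p.1 p.2) (x : E) (t : F) :
    DifferentiableAt 𝕜 (fun y => Y y t) x :=
  (hY (x, t)).comp (f := fun y => (y, t)) x (differentiableAt_id.prodMk (differentiableAt_const t))

theorem Differentiable.differentiableAt_curry_right {Y : E → F → G}
    (hY : Differentiable 𝕜 fun p : E × F => Y p.1 p.2) (x : E) (t : F) :
    DifferentiableAt 𝕜 (fun s => Y x s) t :=
  (hY (x, t)).comp (f := fun s => (x, s)) t ((differentiableAt_const x).prodMk differentiableAt_id)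

end

theorem linear_system_solution_gives_riccati_F_general
    (α : ℂ) (φ ψ : ℂ → ℂ)
    (hψ0 : ∀ x : ℂ, ψ x ≠ 0)
    (hψ'' : ∀ x : ℂ, deriv (deriv ψ) x = (2 * x - 2 * ψ x * φ x) * ψ x)
    (hW : ∀ x : ℂ, deriv φ x * ψ x - φ x * deriv ψ x = 2 * α)
    (z u : ℂ → ℂ)
    (hz : z = fun x => -(ψ x * φ x))
    (hu : u = fun x => -(deriv ψ x / ψ x))
    (Y₁ Y₂ : ℂ → ℂ → ℂ)
    (hY₁diff : Differentiable ℂ fun p : ℂ × ℂ => Y₁ p.1 p.2)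
    (hY₂diff : Differentiable ℂ fun p : ℂ × ℂ => Y₂ p.1 p.2)
    (hY₁t : ∀ x t : ℂ, deriv (fun s => Y₁ x s) t =
      Amat α ψ z u x t 0 0 * Y₁ x t + Amat α ψ z u x t 0 1 * Y₂ x t)
    (hY₂t : ∀ x t : ℂ, deriv (fun s => Y₂ x s) t =
      Amat α ψ z u x t 1 0 * Y₁ x t + Amat α ψ z u x t 1 1 * Y₂ x t)
    (hY₁x : ∀ x t : ℂ, deriv (fun y => Y₁ y t) x =
      Bmat ψ z x t 0 0 * Y₁ x t + Bmat ψ z x t 0 1 * Y₂ x t)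
    (hY₂x : ∀ x t : ℂ, deriv (fun y => Y₂ y t) x =
      Bmat ψ z x t 1 0 * Y₁ x t + Bmat ψ z x t 1 1 * Y₂ x t)
    (hY₁0 : ∀ x t : ℂ, Y₁ x t ≠ 0)
    (F : ℂ → ℂ → ℂ)
    (hF : ∀ x t : ℂ, F x t = t * Y₂ x t / Y₁ x t) :
    ∀ x t : ℂ,
      t * deriv (fun y => F y t) x = -ψ x * (F x t) ^ 2 + t ^ 2 * F x t - t ^ 2 * φ x
        ∧
      2 * t * deriv (fun s => F x s) t =
        -(deriv ψ x - t * ψ x) * (F x t) ^ 2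
          + ((deriv (deriv ψ) x / ψ x) * t + 2 - t ^ 3) * F x t
          + t ^ 2 * (deriv φ x + t * φ x) := by
  intro x t
  have hwx := HasDerivAt.div_of_linear_system (f := fun y => Y₁ y t) (g := fun y => Y₂ y t)
    (hY₁x x t ▸ (hY₁diff.differentiableAt_curry_left x t).hasDerivAt)
    (hY₂x x t ▸ (hY₂diff.differentiableAt_curry_left x t).hasDerivAt) (hY₁0 x t)
  have hwt := HasDerivAt.div_of_linear_system (f := fun s => Y₁ x s) (g := fun s => Y₂ x s)
    (hY₁t x t ▸ (hY₁diff.differentiableAt_curry_right x t).hasDerivAt)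
    (hY₂t x t ▸ (hY₂diff.differentiableAt_curry_right x t).hasDerivAt) (hY₁0 x t)
  have hFw : ∀ x t, F x t = t * (Y₂ x t / Y₁ x t) := fun x t => (hF x t).trans (mul_div_assoc ..)
  simp only [hFw]
  rw [(hwx.const_mul t).deriv, ((hasDerivAt_id' t).fun_mul hwt).deriv, hψ'' x]
  obtain rfl : α = (deriv φ x * ψ x - φ x * deriv ψ x) / 2 := by linear_combination -hW x / 2
  subst hz hu
  simp only [Amat, Bmat, Matrix.of_apply, Matrix.cons_val', Matrix.cons_val_zero, Matrix.cons_val_one,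
    Matrix.empty_val', Matrix.cons_val_fin_one]
  generalize Y₂ x t / Y₁ x t = w
  have hψx := hψ0 x
  constructor <;> (field_simp; ring)

/-- **Remark 2.9 (converse direction for `F`).** If `Y = (Y₁, Y₂)ᵀ` solves the
isomonodromic linear system `∂Y/∂t = AY`, `∂Y/∂x = BY` (with `z = −ψφ`, `u₋₁ = −ψ'/ψ`)
and `Y₁` is nowhere zero, then `F = t·Y₂/Y₁` satisfies both Riccati equations
`t F_x = −ψF² + t²F − t²φ` and
`2t F_t = −(ψ' − tψ)F² + ((ψ''/ψ)t + 2 − t³)F + t²(φ' + tφ)`. -/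
theorem linear_system_solution_gives_riccati_F
    (α : ℂ) (φ ψ : ℂ → ℂ) (hφ : Differentiable ℂ φ) (hψ : Differentiable ℂ ψ)
    (hψ0 : ∀ x : ℂ, ψ x ≠ 0)
    (hψ'' : ∀ x : ℂ, deriv (deriv ψ) x = (2 * x - 2 * ψ x * φ x) * ψ x)
    (hφ'' : ∀ x : ℂ, deriv (deriv φ) x = (2 * x - 2 * ψ x * φ x) * φ x)
    (hW : ∀ x : ℂ, deriv φ x * ψ x - φ x * deriv ψ x = 2 * α)
    (z u : ℂ → ℂ)
    (hz : z = fun x => -(ψ x * φ x))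
    (hu : u = fun x => -(deriv ψ x / ψ x))
    (Y₁ Y₂ : ℂ → ℂ → ℂ)
    (hY₁diff : Differentiable ℂ fun p : ℂ × ℂ => Y₁ p.1 p.2)
    (hY₂diff : Differentiable ℂ fun p : ℂ × ℂ => Y₂ p.1 p.2)
    (hY₁t : ∀ x t : ℂ, deriv (fun s => Y₁ x s) t =
      Amat α ψ z u x t 0 0 * Y₁ x t + Amat α ψ z u x t 0 1 * Y₂ x t)
    (hY₂t : ∀ x t : ℂ, deriv (fun s => Y₂ x s) t =
      Amat α ψ z u x t 1 0 * Y₁ x t + Amat α ψ z u x t 1 1 * Y₂ x t)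
    (hY₁x : ∀ x t : ℂ, deriv (fun y => Y₁ y t) x =
      Bmat ψ z x t 0 0 * Y₁ x t + Bmat ψ z x t 0 1 * Y₂ x t)
    (hY₂x : ∀ x t : ℂ, deriv (fun y => Y₂ y t) x =
      Bmat ψ z x t 1 0 * Y₁ x t + Bmat ψ z x t 1 1 * Y₂ x t)
    (hY₁0 : ∀ x t : ℂ, Y₁ x t ≠ 0)
    (F : ℂ → ℂ → ℂ)
    (hF : ∀ x t : ℂ, F x t = t * Y₂ x t / Y₁ x t) :
    ∀ x t : ℂ,
      t * deriv (fun y => F y t) x = -ψ x * (F x t) ^ 2 + t ^ 2 * F x t - t ^ 2 * φ x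
        ∧
      2 * t * deriv (fun s => F x s) t =
        -(deriv ψ x - t * ψ x) * (F x t) ^ 2
          + ((deriv (deriv ψ) x / ψ x) * t + 2 - t ^ 3) * F x t
          + t ^ 2 * (deriv φ x + t * φ x) :=
  linear_system_solution_gives_riccati_F_general α φ ψ hψ0 hψ'' hW z u hz hu Y₁ Y₂ hY₁diff hY₂diff
    hY₁t hY₂t hY₁x hY₂x hY₁0 F hF
end

section
/- Let p₀, p₁, p₂, q₀, q₁ ∈ ℂ with p₀ ≠ 0 and q₀ ≠ 0. Let F be a nonzero formal Laurent series over ℂ in the variable s (so F ∈ ℂ((s)), with s representing t^{-1}), satisfying the equation −2s⁴·dF/ds = −s²(p₁s − p₀)·F² + ((p₂/p₀)s² + 2s³ − 1)·F + q₁·s + q₀ in ℂ((s)). Then the order of F is either 0 or −2; that is, F = ∑_{n≥0} c_n s^n with c₀ ≠ 0, or F = s^{-2}·∑_{n≥0} d_n s^n with d₀ ≠ 0. -/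
/-!
Dominant balance. Put `N = order F` and rewrite the equation as
`F = p₀s²F² - p₁s³F² + (p₂/p₀)s²F + 2s³F + 2s⁴F' + q₁s + q₀`, then compare the coefficients
of one power of `s` in each excluded case. If `N > 0`, at `s⁰` only `q₀` survives. If `N = -1`, at
`s⁻¹` only the leading coefficient of `F` survives, since `s²F²` starts at `s⁰`. If `N < -2`, at
`s^(2N+2)` only `p₀` times the square of the leading coefficient survives, since every other term
starts at a higher power.
-/

/-- Formal derivative `dF/ds` of a formal Laurent series. -/
noncomputable def lderiv (F : LaurentSeries ℂ) : LaurentSeries ℂ where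
  coeff n := ((n + 1 : ℤ) : ℂ) * F.coeff (n + 1)
  isPWO_support' := by
    apply Set.IsPWO.mono
      (F.isPWO_support'.image_of_monotone
        (fun a b h => sub_le_sub_right h 1 : Monotone fun m : ℤ => m - 1))
    intro n hn
    simp only [Function.mem_support] at hn
    refine ⟨n + 1, ?_, by ring⟩
    simp only [HahnSeries.support, Function.mem_support]
    intro h
    exact hn (by rw [h, mul_zero])

open HahnSeries

section Square

variable {Γ R : Type*} [AddCommMonoid Γ] [LinearOrder Γ] [IsOrderedCancelAddMonoid Γ] [Semiring R]

theorem HahnSeries.coeff_sq_eq_zero_of_lt [NoZeroDivisors R] (x : R⟦Γ⟧) {i : Γ}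
    (hi : i < x.order + x.order) : (x ^ 2).coeff i = 0 :=
  coeff_eq_zero_of_lt_order (by rwa [order_pow, two_nsmul])

theorem HahnSeries.coeff_sq_order_add_order (x : R⟦Γ⟧) :
    (x ^ 2).coeff (x.order + x.order) = x.leadingCoeff ^ 2 := by
  rw [sq, sq, coeff_mul_order_add_order]

end Square

theorem coeff_lderiv (F : LaurentSeries ℂ) (n : ℤ) :
    (lderiv F).coeff n = (n + 1) * F.coeff (n + 1) := by
  simp [lderiv]

def IsRiccatiSolution (p₀ p₁ p₂ q₀ q₁ : ℂ) (F : LaurentSeries ℂ) : Prop :=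
  (-2 * single 4 1 * lderiv F : LaurentSeries ℂ) =
    -single 2 1 * (single 1 p₁ - single 0 p₀) * F ^ 2
      + (single 2 (p₂ / p₀) + 2 * single 3 1 - 1) * F + single 1 q₁ + single 0 q₀

namespace IsRiccatiSolution

variable {p₀ p₁ p₂ q₀ q₁ : ℂ} {F : LaurentSeries ℂ}

theorem eq_fixedPoint (h : IsRiccatiSolution p₀ p₁ p₂ q₀ q₁ F) :
    F = single 2 p₀ * F ^ 2 - single 3 p₁ * F ^ 2 + single 2 (p₂ / p₀) * F
      + single 3 2 * F + single 4 2 * lderiv F + single 1 q₁ + single 0 q₀ := by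
  have h₁ : (single 2 1 * single 1 p₁ : LaurentSeries ℂ) = single 3 p₁ := by
    rw [single_mul_single, one_mul]; rfl
  have h₂ : (single 2 1 * single 0 p₀ : LaurentSeries ℂ) = single 2 p₀ := by
    rw [single_mul_single, one_mul, add_zero]
  have h₃ : (2 * single 3 1 : LaurentSeries ℂ) = single 3 2 := by
    rw [two_mul, ← single_add, one_add_one_eq_two]
  have h₄ : (2 * single 4 1 : LaurentSeries ℂ) = single 4 2 := by
    rw [two_mul, ← single_add, one_add_one_eq_two]
  unfold IsRiccatiSolution at h
  linear_combination h + F ^ 2 * h₂ - F ^ 2 * h₁ + F * h₃ + lderiv F * h₄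

theorem coeff_eq (h : IsRiccatiSolution p₀ p₁ p₂ q₀ q₁ F) (k : ℤ) :
    F.coeff k = p₀ * (F ^ 2).coeff (k - 2) - p₁ * (F ^ 2).coeff (k - 3)
      + p₂ / p₀ * F.coeff (k - 2) + 2 * (k - 2) * F.coeff (k - 3)
      + (single 1 q₁ : LaurentSeries ℂ).coeff k + (single 0 q₀ : LaurentSeries ℂ).coeff k := by
  conv_lhs => rw [h.eq_fixedPoint]
  simp only [coeff_add, coeff_sub, coeff_single_mul, coeff_lderiv, show k - 4 + 1 = k - 3 by ring]
  push_cast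
  ring

theorem order_nonpos (hq₀ : q₀ ≠ 0) (h : IsRiccatiSolution p₀ p₁ p₂ q₀ q₁ F) : F.order ≤ 0 := by
  by_contra! hpos
  have h₀ := h.coeff_eq 0
  rw [coeff_eq_zero_of_lt_order hpos, coeff_sq_eq_zero_of_lt (i := 0 - 2) F (by omega),
    coeff_sq_eq_zero_of_lt (i := 0 - 3) F (by omega),
    coeff_eq_zero_of_lt_order (i := 0 - 2) (by omega),
    coeff_eq_zero_of_lt_order (i := 0 - 3) (by omega), coeff_single_of_ne (by omega),
    coeff_single_same] at h₀
  simp only [mul_zero, sub_zero, add_zero, zero_add] at h₀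
  exact hq₀ h₀.symm

theorem order_ne_neg_one (hF : F ≠ 0) (h : IsRiccatiSolution p₀ p₁ p₂ q₀ q₁ F) :
    F.order ≠ -1 := by
  intro hN
  have h₁ := h.coeff_eq (-1)
  rw [coeff_sq_eq_zero_of_lt (i := -1 - 2) F (by omega),
    coeff_sq_eq_zero_of_lt (i := -1 - 3) F (by omega),
    coeff_eq_zero_of_lt_order (i := -1 - 2) (by omega),
    coeff_eq_zero_of_lt_order (i := -1 - 3) (by omega),
    coeff_single_of_ne (by omega), coeff_single_of_ne (by omega)] at h₁
  simp only [mul_zero, sub_zero, add_zero] at h₁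
  exact leadingCoeff_ne_zero.mpr hF (by rw [leadingCoeff_eq, hN, h₁])

theorem neg_two_le_order (hp₀ : p₀ ≠ 0) (hF : F ≠ 0) (h : IsRiccatiSolution p₀ p₁ p₂ q₀ q₁ F) :
    -2 ≤ F.order := by
  by_contra! hlt
  set N := F.order
  have h₂ := h.coeff_eq (N + N + 2)
  rw [add_sub_cancel_right, coeff_sq_order_add_order,
    coeff_eq_zero_of_lt_order (i := N + N + 2) (by omega),
    coeff_sq_eq_zero_of_lt (i := N + N + 2 - 3) F (by omega),
    coeff_eq_zero_of_lt_order (i := N + N) (by omega),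
    coeff_eq_zero_of_lt_order (i := N + N + 2 - 3) (by omega),
    coeff_single_of_ne (by omega), coeff_single_of_ne (by omega)] at h₂
  simp only [mul_zero, sub_zero, add_zero] at h₂
  exact mul_ne_zero hp₀ (pow_ne_zero 2 (leadingCoeff_ne_zero.mpr hF)) h₂.symm

end IsRiccatiSolution

/-- **Proposition 3.1.** A nonzero formal Laurent series solution `F ∈ ℂ((s))` of the
Riccati equation `2t∂ₜF = −(p₁ − tp₀)F² + ((p₂/p₀)t + 2 − t³)F + t²(q₁ + tq₀)`,
rewritten in `s = t^{-1}` as `−2s⁴ dF/ds = −s²(p₁s − p₀)F² + ((p₂/p₀)s² + 2s³ − 1)F + q₁s + q₀`,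
has order `0` or `−2`: only the two kinds of power-series solutions
`F = ∑ c_n t^{-n}` and `F = t² ∑ d_n t^{-n}` occur. -/
theorem riccati_laurent_solutions_order
    (p₀ p₁ p₂ q₀ q₁ : ℂ) (hp₀ : p₀ ≠ 0) (hq₀ : q₀ ≠ 0)
    (F : LaurentSeries ℂ) (hF : F ≠ 0)
    (heq : -2 * HahnSeries.single (4 : ℤ) (1 : ℂ) * lderiv F =
        -(HahnSeries.single (2 : ℤ) (1 : ℂ))
            * (HahnSeries.single (1 : ℤ) p₁ - HahnSeries.single (0 : ℤ) p₀) * F ^ 2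
          + (HahnSeries.single (2 : ℤ) (p₂ / p₀)
              + 2 * HahnSeries.single (3 : ℤ) (1 : ℂ) - 1) * F
          + HahnSeries.single (1 : ℤ) q₁ + HahnSeries.single (0 : ℤ) q₀) :
    F.order = 0 ∨ F.order = -2 := by
  have h : IsRiccatiSolution p₀ p₁ p₂ q₀ q₁ F := heq
  have hle := h.order_nonpos hq₀
  have hne := h.order_ne_neg_one hF
  have hge := h.neg_two_le_order hp₀ hF
  omega
end

section
/- Let p₀, p₁, q₀, q₁, r ∈ ℂ and let Ω ⊆ ℂ \ {0} be an open set. Suppose G : Ω → ℂ is differentiable and nowhere zero on Ω, and satisfies, for all t ∈ Ω, the Riccati equation 2t·G'(t) = −(q₁ − t·q₀)·G(t)² + (r·t + 2 − t³)·G(t) + t²·(p₁ + t·p₀). Then the function F(t) := t²/G(−t), defined for t with −t ∈ Ω, satisfies 2t·F'(t) = −(p₁ − t·p₀)·F(t)² + (r·t + 2 − t³)·F(t) + t²·(q₁ + t·q₀) for all such t. -/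
theorem HasDerivAt.sq_div_comp_neg {𝕜 : Type*} [NontriviallyNormedField 𝕜] {G : 𝕜 → 𝕜}
    {G' t : 𝕜} (hG : HasDerivAt G G' (-t)) (hG0 : G (-t) ≠ 0) :
    HasDerivAt (fun s => s ^ 2 / G (-s)) ((2 * t * G (-t) + t ^ 2 * G') / G (-t) ^ 2) t := by
  have hGneg : HasDerivAt (fun s => G (-s)) (G' * -1) t := hG.comp t (hasDerivAt_neg t)
  refine ((hasDerivAt_pow 2 t).div hGneg hG0).congr_deriv ?_
  push_cast
  ring

/-- With `g = G(-t)` and `g' = G'(-t)`, the hypothesis is the Riccati equation for `G` at `-t`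
and the conclusion the reflected one for `F = t² / G(-t)` at `t`, whose derivative is
`(2tg + t²g') / g²`. -/
theorem riccati_reflection_pointwise {K : Type*} [Field K] {p₀ p₁ q₀ q₁ r t g g' : K}
    (hg : g ≠ 0)
    (hG : 2 * -t * g' =
      -(q₁ - -t * q₀) * g ^ 2 + (r * -t + 2 - (-t) ^ 3) * g + (-t) ^ 2 * (p₁ + -t * p₀)) :
    2 * t * ((2 * t * g + t ^ 2 * g') / g ^ 2) =
      -(p₁ - t * p₀) * (t ^ 2 / g) ^ 2 + (r * t + 2 - t ^ 3) * (t ^ 2 / g)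
        + t ^ 2 * (q₁ + t * q₀) := by
  field_simp
  linear_combination (-t ^ 2) * hG

theorem riccati_reflection_substitution_general
    (p₀ p₁ q₀ q₁ r : ℂ) (Ω : Set ℂ)
    (G : ℂ → ℂ)
    (hGdiff : ∀ t ∈ Ω, DifferentiableAt ℂ G t)
    (hG0 : ∀ t ∈ Ω, G t ≠ 0)
    (hG : ∀ t ∈ Ω, 2 * t * deriv G t =
      -(q₁ - t * q₀) * (G t) ^ 2 + (r * t + 2 - t ^ 3) * G t + t ^ 2 * (p₁ + t * p₀)) :
    ∀ t : ℂ, -t ∈ Ω →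
      2 * t * deriv (fun s => s ^ 2 / G (-s)) t =
        -(p₁ - t * p₀) * (t ^ 2 / G (-t)) ^ 2 + (r * t + 2 - t ^ 3) * (t ^ 2 / G (-t))
          + t ^ 2 * (q₁ + t * q₀) := by
  intro t ht
  rw [((hGdiff _ ht).hasDerivAt.sq_div_comp_neg (hG0 _ ht)).deriv]
  exact riccati_reflection_pointwise (hG0 _ ht) (hG _ ht)

/-- **Proposition 3.3.** If `G` is a nowhere-zero differentiable solution on an open set
`Ω ⊆ ℂ \ {0}` of the Riccati equation
`2t G' = −(q₁ − tq₀)G² + (rt + 2 − t³)G + t²(p₁ + tp₀)`,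
then `F(t) = t²/G(−t)` satisfies
`2t F' = −(p₁ − tp₀)F² + (rt + 2 − t³)F + t²(q₁ + tq₀)`
for every `t` with `−t ∈ Ω`. -/
theorem riccati_reflection_substitution
    (p₀ p₁ q₀ q₁ r : ℂ) (Ω : Set ℂ) (hΩopen : IsOpen Ω) (hΩ : Ω ⊆ {t : ℂ | t ≠ 0})
    (G : ℂ → ℂ)
    (hGdiff : ∀ t ∈ Ω, DifferentiableAt ℂ G t)
    (hG0 : ∀ t ∈ Ω, G t ≠ 0)
    (hG : ∀ t ∈ Ω, 2 * t * deriv G t =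
      -(q₁ - t * q₀) * (G t) ^ 2 + (r * t + 2 - t ^ 3) * G t + t ^ 2 * (p₁ + t * p₀)) :
    ∀ t : ℂ, -t ∈ Ω →
      2 * t * deriv (fun s => s ^ 2 / G (-s)) t =
        -(p₁ - t * p₀) * (t ^ 2 / G (-t)) ^ 2 + (r * t + 2 - t ^ 3) * (t ^ 2 / G (-t))
          + t ^ 2 * (q₁ + t * q₀) :=
  riccati_reflection_substitution_general p₀ p₁ q₀ q₁ r Ω G hGdiff hG0 hG
end

section
/- Let φ, ψ : ℂ → ℂ be entire functions with ψ and φ nowhere vanishing. Define d_n : ℂ → ℂ by d₀ = −ψ, d₁ = ψ', d₂ = (ψ''ψ − (ψ')² + φψ³)/ψ, and d_n = d_{n-1}' + (1/ψ)·∑_{k=2}^{n-2} d_k d_{n-k} for n ≥ 3; define f_n by f₀ = −φ, f₁ = φ', f₂ = (φ''φ − (φ')² + ψφ³)/φ, and f_n = f_{n-1}' + (1/φ)·∑_{k=2}^{n-2} f_k f_{n-k} for n ≥ 3. Then, with the convention d₋₁ = f₋₁ = 0, for every n ≥ 0 and all x ∈ ℂ: ψ·d_{n-1}' − 2ψ'·d_{n-1}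 + ψ·d_n + ∑_{i+j=n, i,j≥0} d_i d_j + ψ³φ·[n = 2] = 0, and φ·f_{n-1}' − 2φ'·f_{n-1} + φ·f_n + ∑_{i+j=n, i,j≥0} f_i f_j + φ³ψ·[n = 2] = 0, where [n=2] equals 1 if n = 2 and 0 otherwise. -/
/-!
For `n ≤ 2` the identities are direct computations from the explicit `d₀, d₁, d₂`. For
`n ≥ 3`, the Cauchy product `∑_{i+j=n} dᵢ dⱼ` splits into the end terms
`2 d₀ dₙ + 2 d₁ dₙ₋₁ = −2ψ dₙ + 2ψ' dₙ₋₁` and the middle sum `∑_{k=2}^{n-2} dₖ dₙ₋ₖ`, which the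
recursion rewrites as `ψ (dₙ − dₙ₋₁')`; everything then cancels.
-/

open Finset

theorem Finset.sum_range_add_four_eq {M : Type*} [AddCommMonoid M] (g : ℕ → M) (m : ℕ) :
    ∑ k ∈ range (m + 4), g k
      = g 0 + g 1 + (∑ k ∈ Icc 2 (m + 1), g k) + g (m + 2) + g (m + 3) := by
  rw [range_eq_Ico, sum_Ico_succ_top (by omega), sum_Ico_succ_top (by omega),
    sum_eq_sum_Ico_succ_bot (by omega), sum_eq_sum_Ico_succ_bot (by omega),
    ← Ico_add_one_right_eq_Icc]
  simp only [add_assoc]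
  rfl

section RiccatiCoefficients

variable {𝕜 : Type*} [NontriviallyNormedField 𝕜]

/-- The left-hand side of the `n`-th coefficient identity, where `dm n` stands for `d (n - 1)`
with `d (-1) = 0`. -/
noncomputable def riccatiResidual (φ ψ : 𝕜 → 𝕜) (d dm : ℕ → 𝕜 → 𝕜) (n : ℕ) (x : 𝕜) : 𝕜 :=
  ψ x * deriv (dm n) x - 2 * deriv ψ x * dm n x + ψ x * d n x
    + (∑ k ∈ range (n + 1), d k x * d (n - k) x)
    + (if n = 2 then ψ x ^ 3 * φ x else 0)

variable {φ ψ : 𝕜 → 𝕜} {d dm : ℕ → 𝕜 → 𝕜}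

theorem riccatiResidual_zero (hd0 : d 0 = fun x => -ψ x) (hdm0 : dm 0 = 0) (x : 𝕜) :
    riccatiResidual φ ψ d dm 0 x = 0 := by
  simp [riccatiResidual, hdm0, hd0]

theorem riccatiResidual_one (hd0 : d 0 = fun x => -ψ x) (hd1 : d 1 = deriv ψ)
    (hdm1 : dm 1 = d 0) (x : 𝕜) :
    riccatiResidual φ ψ d dm 1 x = 0 := by
  simp only [riccatiResidual, hdm1, hd0, hd1, deriv.fun_neg, sum_range_succ, sum_range_zero]
  norm_num
  ring

theorem riccatiResidual_two {x : 𝕜} (hx : ψ x ≠ 0) (hd0 : d 0 = fun x => -ψ x)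
    (hd1 : d 1 = deriv ψ)
    (hd2 : d 2 = fun x =>
      (deriv (deriv ψ) x * ψ x - (deriv ψ x) ^ 2 + φ x * (ψ x) ^ 3) / ψ x)
    (hdm2 : dm 2 = d 1) :
    riccatiResidual φ ψ d dm 2 x = 0 := by
  simp only [riccatiResidual, hdm2, hd0, hd1, hd2, sum_range_succ, sum_range_zero, ↓reduceIte]
  field_simp
  ring

theorem riccatiResidual_add_three {x : 𝕜} (hx : ψ x ≠ 0) (hd0 : d 0 = fun x => -ψ x)
    (hd1 : d 1 = deriv ψ)
    (hd : ∀ n : ℕ, d (n + 3) = deriv (d (n + 2)) + fun x =>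
      (1 / ψ x) * ∑ k ∈ Icc 2 (n + 1), d k x * d (n + 3 - k) x)
    (m : ℕ) (hdm : dm (m + 3) = d (m + 2)) :
    riccatiResidual φ ψ d dm (m + 3) x = 0 := by
  have hrec : d (m + 3) x = deriv (d (m + 2)) x
      + (1 / ψ x) * ∑ k ∈ Icc 2 (m + 1), d k x * d (m + 3 - k) x := by
    rw [hd m]; rfl
  rw [riccatiResidual, hdm, sum_range_add_four_eq (fun k => d k x * d (m + 3 - k) x) m]
  simp only [Nat.sub_zero, show m + 3 - 1 = m + 2 by omega,
    show m + 3 - (m + 2) = 1 by omega, Nat.sub_self, hd0, hd1,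
    if_neg (by omega : m + 3 ≠ 2)]
  rw [hrec]
  field_simp
  ring

theorem riccatiResidual_eq_zero (hψ0 : ∀ x, ψ x ≠ 0) (hd0 : d 0 = fun x => -ψ x)
    (hd1 : d 1 = deriv ψ)
    (hd2 : d 2 = fun x =>
      (deriv (deriv ψ) x * ψ x - (deriv ψ x) ^ 2 + φ x * (ψ x) ^ 3) / ψ x)
    (hd : ∀ n : ℕ, d (n + 3) = deriv (d (n + 2)) + fun x =>
      (1 / ψ x) * ∑ k ∈ Icc 2 (n + 1), d k x * d (n + 3 - k) x)
    (hdm0 : dm 0 = 0) (hdm : ∀ n : ℕ, dm (n + 1) = d n) :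
    ∀ n x, riccatiResidual φ ψ d dm n x = 0
  | 0, x => riccatiResidual_zero hd0 hdm0 x
  | 1, x => riccatiResidual_one hd0 hd1 (hdm 0) x
  | 2, x => riccatiResidual_two (hψ0 x) hd0 hd1 hd2 (hdm 1)
  | m + 3, x => riccatiResidual_add_three (hψ0 x) hd0 hd1 hd m (hdm (m + 2))

end RiccatiCoefficients

theorem second_solution_coefficient_identities_general
    (φ ψ : ℂ → ℂ)
    (hφ0 : ∀ x : ℂ, φ x ≠ 0) (hψ0 : ∀ x : ℂ, ψ x ≠ 0)
    (d f : ℕ → ℂ → ℂ)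
    (hd0 : d 0 = fun x => -ψ x)
    (hd1 : d 1 = deriv ψ)
    (hd2 : d 2 = fun x =>
      (deriv (deriv ψ) x * ψ x - (deriv ψ x) ^ 2 + φ x * (ψ x) ^ 3) / ψ x)
    (hd : ∀ n : ℕ, d (n + 3) = deriv (d (n + 2)) + fun x =>
      (1 / ψ x) * ∑ k ∈ Finset.Icc 2 (n + 1), d k x * d (n + 3 - k) x)
    (hf0 : f 0 = fun x => -φ x)
    (hf1 : f 1 = deriv φ)
    (hf2 : f 2 = fun x =>
      (deriv (deriv φ) x * φ x - (deriv φ x) ^ 2 + ψ x * (φ x) ^ 3) / φ x)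
    (hf : ∀ n : ℕ, f (n + 3) = deriv (f (n + 2)) + fun x =>
      (1 / φ x) * ∑ k ∈ Finset.Icc 2 (n + 1), f k x * f (n + 3 - k) x)
    (dm fm : ℕ → ℂ → ℂ)
    (hdm0 : dm 0 = 0) (hdm : ∀ n : ℕ, dm (n + 1) = d n)
    (hfm0 : fm 0 = 0) (hfm : ∀ n : ℕ, fm (n + 1) = f n) :
    ∀ (n : ℕ) (x : ℂ),
      (ψ x * deriv (dm n) x - 2 * deriv ψ x * dm n x + ψ x * d n x
          + (∑ k ∈ Finset.range (n + 1), d k x * d (n - k) x)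
          + (if n = 2 then (ψ x) ^ 3 * φ x else 0) = 0)
        ∧
      (φ x * deriv (fm n) x - 2 * deriv φ x * fm n x + φ x * f n x
          + (∑ k ∈ Finset.range (n + 1), f k x * f (n - k) x)
          + (if n = 2 then (φ x) ^ 3 * ψ x else 0) = 0) := fun n x =>
  ⟨riccatiResidual_eq_zero hψ0 hd0 hd1 hd2 hd hdm0 hdm n x,
    riccatiResidual_eq_zero hφ0 hf0 hf1 hf2 hf hfm0 hfm n x⟩

/-- **Lemma 3.5, coefficientwise form.** For entire, nowhere-vanishing `φ, ψ`, the
sequences `d_n` and `f_n` (with `d₀ = −ψ`, `d₁ = ψ'`, `d₂ = (ψ''ψ − (ψ')² + φψ³)/ψ`,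
`d_n = d_{n-1}' + (1/ψ)∑_{k=2}^{n-2} d_k d_{n-k}` and symmetrically for `f`), with the
convention `d₋₁ = f₋₁ = 0` (realized by the shifted sequences `dm, fm`), satisfy for all
`n ≥ 0` the identities expressing that
`F⁽²⁾ = −(t²/ψ²)∑ d_n(−t)^{-n}` solves `t∂ₓF = −ψF² + t²F − t²φ` and
`G⁽²⁾ = −(t²/φ²)∑ f_n(−t)^{-n}` solves `t∂ₓG = −φG² + t²G − t²ψ`. -/
theorem second_solution_coefficient_identities
    (φ ψ : ℂ → ℂ) (hφ : Differentiable ℂ φ) (hψ : Differentiable ℂ ψ)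
    (hφ0 : ∀ x : ℂ, φ x ≠ 0) (hψ0 : ∀ x : ℂ, ψ x ≠ 0)
    (d f : ℕ → ℂ → ℂ)
    (hd0 : d 0 = fun x => -ψ x)
    (hd1 : d 1 = deriv ψ)
    (hd2 : d 2 = fun x =>
      (deriv (deriv ψ) x * ψ x - (deriv ψ x) ^ 2 + φ x * (ψ x) ^ 3) / ψ x)
    (hd : ∀ n : ℕ, d (n + 3) = deriv (d (n + 2)) + fun x =>
      (1 / ψ x) * ∑ k ∈ Finset.Icc 2 (n + 1), d k x * d (n + 3 - k) x)
    (hf0 : f 0 = fun x => -φ x)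
    (hf1 : f 1 = deriv φ)
    (hf2 : f 2 = fun x =>
      (deriv (deriv φ) x * φ x - (deriv φ x) ^ 2 + ψ x * (φ x) ^ 3) / φ x)
    (hf : ∀ n : ℕ, f (n + 3) = deriv (f (n + 2)) + fun x =>
      (1 / φ x) * ∑ k ∈ Finset.Icc 2 (n + 1), f k x * f (n + 3 - k) x)
    (dm fm : ℕ → ℂ → ℂ)
    (hdm0 : dm 0 = 0) (hdm : ∀ n : ℕ, dm (n + 1) = d n)
    (hfm0 : fm 0 = 0) (hfm : ∀ n : ℕ, fm (n + 1) = f n) :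
    ∀ (n : ℕ) (x : ℂ),
      (ψ x * deriv (dm n) x - 2 * deriv ψ x * dm n x + ψ x * d n x
          + (∑ k ∈ Finset.range (n + 1), d k x * d (n - k) x)
          + (if n = 2 then (ψ x) ^ 3 * φ x else 0) = 0)
        ∧
      (φ x * deriv (fm n) x - 2 * deriv φ x * fm n x + φ x * f n x
          + (∑ k ∈ Finset.range (n + 1), f k x * f (n - k) x)
          + (if n = 2 then (φ x) ^ 3 * ψ x else 0) = 0) :=
  second_solution_coefficient_identities_general φ ψ hφ0 hψ0 d f hd0 hd1 hd2 hd hf0 hf1 hf2 hf dm fm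
    hdm0 hdm hfm0 hfm
end

section
/- Let α ∈ ℂ and let φ, ψ : ℂ → ℂ be entire functions with ψ nowhere vanishing, satisfying ψ''(x) = (2x − 2ψ(x)φ(x))·ψ(x), φ''(x) = (2x − 2ψ(x)φ(x))·φ(x), and φ'(x)ψ(x) − φ(x)ψ'(x) = 2α for all x ∈ ℂ. Define b_n by b₀ = ψ, b_n = b_{n-1}' + φ·(∑_{i+j=n-2, i,j≥0} b_i b_j), and the Hankel determinants τ_{-N} = det(b_{i+j})_{0≤i,j≤N-1} for N ≥ 1 (τ₀ = 1); assume τ_m is nowhere vanishing for every m < 0. Define d_n by d₀ = −ψ, d₁ = ψ', d₂ = (ψ''ψ − (ψ')² + φψ³)/ψ, d_n = d_{n-1}' + (1/ψ)·∑_{k=2}^{n-2} d_k d_{n-k} for n ≥ 3, and set κ₋₁ = 1 and κ_{-n-1} = det(d_{i+j})_{1≤i,j≤n} for n ≥ 1. Then for every n ≤ −1 and all x ∈ ℂ: κ_n(x) = τ_n(x)/ψ(x). -/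
/-!
Let `B = ∑ bₙ zⁿ`, `D = ∑ dₙ zⁿ` and `E = ∑ dₙ₊₂ zⁿ`, power series whose coefficients are
functions of `x`, and let `∂` differentiate them coefficientwise. The recursions say
`B = ψ + z ∂B + φ z² B²`, `E = d₂ + z ∂E + ψ⁻¹ z² E²` and `D = -ψ + ψ' z + z² E`; together with the
formula for `d₂` they give, for `F = B D + ψ²`, the identity `ψ (F - z ∂F) = z F (zE - ψ' + φ ψ z B)`.
Since `F₀ = 0`, it forces every coefficient of `F` to vanish, i.e. `B D = -ψ²`.

At a fixed `x`, `B D = -ψ²` gives `ψ² (b_{i+j}) = L Δ Lᵀ`, where `L = (b_{i-k})` is lower-triangular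
Toeplitz with determinant `ψ^{N+1}` and `Δ = diag(ψ, (d_{i+j+2}))`. Taking determinants,
`det (b_{i+j})_{0 ≤ i,j ≤ N} = ψ · det (d_{i+j+2})_{0 ≤ i,j < N}`.
-/

open Finset PowerSeries

section Hankel

variable {K : Type*} [CommRing K] {a : K} {b d : ℕ → K}

theorem box_sum_eq_of_conv (hb0 : b 0 = a)
    (hconv : ∀ n, ∑ k ∈ range (n + 1), b (n - k) * d k = if n = 0 then -a ^ 2 else 0)
    (i j : ℕ) :
    ∑ k ∈ range (i + 1), ∑ l ∈ range (j + 1), b (i - k) * b (j - l) * d (k + l) =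
      a ^ 2 * (b (i + j) - (if j = 0 then b i else 0) - (if i = 0 then b j else 0)) := by
  induction i generalizing j with
  | zero =>
    simp only [zero_add, sum_range_one, Nat.sub_zero, hb0, mul_assoc, ← mul_sum, hconv j]
    split_ifs <;> ring
  | succ i ih =>
    have hexchange :
        ∑ k ∈ range (i + 2), ∑ l ∈ range (j + 1), b (i + 1 - k) * b (j - l) * d (k + l) =
          b (i + 1) * ∑ l ∈ range (j + 1), b (j - l) * d l
            + ∑ k ∈ range (i + 1), ∑ l ∈ range (j + 2), b (i - k) * b (j + 1 - l) * d (k + l)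
            - b (j + 1) * ∑ k ∈ range (i + 1), b (i - k) * d k := by
      simp only [sum_range_succ' _ (i + 1), sum_range_succ' _ (j + 1), sum_add_distrib, mul_sum,
        Nat.add_sub_add_right, Nat.sub_zero, add_zero, zero_add, ← add_assoc,
        Nat.add_right_comm _ 1, mul_assoc, mul_left_comm (b (j + 1))]
      ring
    rw [hexchange, ih, hconv, hconv, Nat.add_right_comm i 1 j]
    simp only [Nat.add_one_ne_zero, if_false]
    split_ifs <;> subst_vars <;> ring_nf

theorem box_sum_succ_eq_of_conv [IsDomain K] (ha : a ≠ 0) (hb0 : b 0 = a)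
    (hconv : ∀ n, ∑ k ∈ range (n + 1), b (n - k) * d k = if n = 0 then -a ^ 2 else 0)
    (i j : ℕ) :
    ∑ k ∈ range i, ∑ l ∈ range j, b (i - (k + 1)) * b (j - (l + 1)) * d (k + 1 + (l + 1)) =
      a ^ 2 * b (i + j) - a * b i * b j := by
  have hd0 : d 0 = -a := by
    have h := hconv 0
    simp only [zero_add, sum_range_one, Nat.sub_zero, hb0, if_true] at h
    exact mul_left_cancel₀ ha (by rw [h]; ring)
  have hedge : ∀ m n, ∑ k ∈ range m, b (m - (k + 1)) * b n * d (k + 1) + b m * b n * -a =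
      b n * if m = 0 then -a ^ 2 else 0 := fun m n => by
    rw [← hconv m, sum_range_succ', mul_add, mul_sum, Nat.sub_zero, hd0]
    congr 1
    · exact sum_congr rfl fun _ _ => by ring
    · ring
  have hbox := box_sum_eq_of_conv hb0 hconv i j
  simp only [sum_range_succ' _ i, sum_range_succ' _ j, sum_add_distrib, Nat.sub_zero, add_zero,
    zero_add, mul_comm (b i), hd0] at hbox
  have hedge_i := hedge i j
  have hedge_j := hedge j i
  split_ifs at hbox hedge_i hedge_j <;> linear_combination hbox - hedge_i - hedge_j

theorem Fin.sum_ite_succ_le {M : Type*} [AddCommMonoid M] {N : ℕ} (i : Fin (N + 1))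
    (f : ℕ → M) : ∑ k : Fin N, (if k.succ ≤ i then f k else 0) = ∑ k ∈ range i, f k := by
  simp only [Fin.le_iff_val_le_val, Fin.val_succ]
  rw [Fin.sum_univ_eq_sum_range (fun k => if k + 1 ≤ (i : ℕ) then f k else 0), sum_ite,
    sum_const_zero, add_zero]
  congr 1
  ext k
  simp only [mem_filter, mem_range]
  omega

theorem hankel_det_eq_mul_det_of_conv [IsDomain K] (ha : a ≠ 0) (hb0 : b 0 = a)
    (hconv : ∀ n, ∑ k ∈ range (n + 1), b (n - k) * d k = if n = 0 then -a ^ 2 else 0)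
    (N : ℕ) :
    (Matrix.of fun i j : Fin (N + 1) => b (i.1 + j.1)).det =
      a * (Matrix.of fun i j : Fin N => d (i.1 + 1 + (j.1 + 1))).det := by
  set L : Matrix (Fin (N + 1)) (Fin (N + 1)) K := .of fun i k => if k ≤ i then b (i - k) else 0
  set Δ : Matrix (Fin (N + 1)) (Fin (N + 1)) K :=
    .of (Fin.cons (Fin.cons a 0) fun i => Fin.cons 0 fun j => d (i.1 + 1 + (j.1 + 1)))
  have hL : L.det = a ^ (N + 1) := by
    rw [Matrix.det_of_isLowerTriangular L fun i k (hik : i < k) => if_neg hik.not_ge]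
    simp [L, hb0]
  have hΔ : Δ.det = a * (Matrix.of fun i j : Fin N => d (i.1 + 1 + (j.1 + 1))).det := by
    rw [Matrix.det_succ_column_zero, Fin.sum_univ_succ]
    simp [Δ, Matrix.submatrix]
  have hfactor : L * Δ * L.transpose = a ^ 2 • Matrix.of fun i j : Fin (N + 1) => b (i.1 + j.1) := by
    ext i j
    have hbox := box_sum_succ_eq_of_conv ha hb0 hconv i j
    rw [sum_comm] at hbox
    simp only [← Fin.sum_ite_succ_le i, ← Fin.sum_ite_succ_le j] at hbox
    simp only [Matrix.mul_apply, Matrix.of_apply, ite_mul, zero_mul, Fin.sum_univ_succ, zero_le,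
      ↓reduceIte, Fin.coe_ofNat_eq_mod, Nat.zero_mod, tsub_zero, Fin.cons_zero, Fin.val_succ,
      Fin.cons_succ, Matrix.transpose_apply, mul_ite, mul_zero, ite_self, sum_const_zero, add_zero,
      Pi.zero_apply, zero_add, sum_mul, mul_right_comm _ (d _), Matrix.smul_apply, smul_eq_mul, L, Δ]
    linear_combination hbox
  have hdet := congrArg Matrix.det hfactor
  rw [Matrix.det_mul, Matrix.det_mul, Matrix.det_transpose, hL, hΔ, Matrix.det_smul,
    Fintype.card_fin] at hdet
  refine mul_left_cancel₀ (pow_ne_zero (2 * (N + 1)) ha) ?_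
  linear_combination -hdet

end Hankel

theorem riccati_product_identity {R : Type*} [CommRing R]
    {X B B' D D' E E' p p' p'' e f q : R}
    (hB : B = p + X * B' + f * X ^ 2 * B ^ 2) (hE : E = e + X * E' + q * X ^ 2 * E ^ 2)
    (hq : p * q = 1) (he : e * p = p'' * p - p' ^ 2 + f * p ^ 3)
    (hD : D = -p + X * p' + X ^ 2 * E) (hD' : D' = -p' + X * p'' + X ^ 2 * E') :
    p * (B * D + p ^ 2 - X * (B' * D + B * D' + 2 * p * p')) =
      X * (B * D + p ^ 2) * (-p' + X * E + f * p * X * B) := by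
  subst hD hD'
  linear_combination (p * (-p + X * p' + X ^ 2 * E)) * hB + (B * X ^ 2 * p) * hE +
    (B * X ^ 4 * E ^ 2) * hq + (B * X ^ 2) * he

namespace PowerSeries

theorem mk_eq_C_add_X_mul_C_add_X_sq_mul {R : Type*} [Semiring R] (f : ℕ → R) :
    mk f = C (f 0) + X * C (f 1) + X ^ 2 * mk fun n => f (n + 2) := by
  ext (_ | _ | n) : 1 <;> simp [coeff_X_pow_mul', coeff_X]

noncomputable def derivCoeffs (F : (ℂ → ℂ)⟦X⟧) : (ℂ → ℂ)⟦X⟧ := mk fun n => deriv (coeff n F)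

@[simp] theorem coeff_derivCoeffs (F : (ℂ → ℂ)⟦X⟧) (n : ℕ) :
    coeff n (derivCoeffs F) = deriv (coeff n F) :=
  coeff_mk _ _

theorem derivCoeffs_mk (f : ℕ → ℂ → ℂ) : derivCoeffs (mk f) = mk fun n => deriv (f n) := by
  ext n : 1
  simp

theorem derivCoeffs_C (f : ℂ → ℂ) : derivCoeffs (C f) = C (deriv f) := by
  ext n : 1
  simp only [coeff_derivCoeffs, coeff_C]
  split_ifs <;> simp

def CoeffsDifferentiable (F : (ℂ → ℂ)⟦X⟧) : Prop := ∀ n, Differentiable ℂ (coeff n F)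

variable {F G : (ℂ → ℂ)⟦X⟧}

theorem coeffsDifferentiable_C {f : ℂ → ℂ} (hf : Differentiable ℂ f) :
    CoeffsDifferentiable (C f) := fun n => by
  rw [coeff_C]
  split_ifs
  exacts [hf, differentiable_const 0]

theorem CoeffsDifferentiable.mul (hF : CoeffsDifferentiable F) (hG : CoeffsDifferentiable G) :
    CoeffsDifferentiable (F * G) := fun n => by
  rw [coeff_mul]
  exact Differentiable.sum fun p _ => (hF p.1).mul (hG p.2)

theorem derivCoeffs_add (hF : CoeffsDifferentiable F) (hG : CoeffsDifferentiable G) :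
    derivCoeffs (F + G) = derivCoeffs F + derivCoeffs G := by
  ext n : 1
  simp only [coeff_derivCoeffs, map_add]
  exact funext fun x => deriv_add (hF n x) (hG n x)

theorem derivCoeffs_mul (hF : CoeffsDifferentiable F) (hG : CoeffsDifferentiable G) :
    derivCoeffs (F * G) = derivCoeffs F * G + F * derivCoeffs G := by
  ext n : 1
  funext x
  simp only [coeff_derivCoeffs, map_add, coeff_mul, ← sum_add_distrib, Finset.sum_apply]
  rw [deriv_sum fun p _ => ((hF p.1).mul (hG p.2)).differentiableAt]
  exact sum_congr rfl fun p _ => deriv_mul (hF p.1 x) (hG p.2 x)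

theorem eq_zero_of_C_mul_sub_X_mul_derivCoeffs {ψ : ℂ → ℂ} (hψ : ∀ x, ψ x ≠ 0)
    {N : (ℂ → ℂ)⟦X⟧} (h0 : coeff 0 F = 0) (h : C ψ * (F - X * derivCoeffs F) = X * F * N) :
    F = 0 := by
  ext n : 1
  induction n using Nat.strong_induction_on with
  | _ n ih =>
  rw [map_zero]
  cases n with
  | zero => exact h0
  | succ n =>
    have hsum : ∑ p ∈ antidiagonal n, coeff p.1 F * coeff p.2 N = 0 :=
      sum_eq_zero fun p hp => by rw [ih p.1 (Nat.antidiagonal.fst_lt hp), map_zero, zero_mul]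
    have hn := congrArg (coeff (n + 1)) h
    rw [coeff_C_mul, map_sub, coeff_succ_X_mul, mul_assoc, coeff_succ_X_mul, coeff_mul, hsum,
      coeff_derivCoeffs, ih n n.lt_succ_self, map_zero] at hn
    funext x
    simpa [hψ x] using congrFun hn x

section Riccati

variable {f : ℕ → ℂ → ℂ} {a : ℂ → ℂ}

theorem mk_eq_of_riccati
    (hf : ∀ n, f (n + 1) = deriv (f n) + fun x => a x * ∑ k ∈ range n, f k x * f (n - 1 - k) x) :
    mk f = C (f 0) + X * derivCoeffs (mk f) + C a * X ^ 2 * mk f ^ 2 := by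
  ext n : 1
  rcases n with _ | n
  · simp
  rw [mul_assoc, map_add, map_add, coeff_C, coeff_succ_X_mul, coeff_C_mul, coeff_X_pow_mul',
    coeff_mk, hf n]
  funext x
  rcases n with _ | n
  · simp
  rw [pow_two, coeff_mul,
    Nat.sum_antidiagonal_eq_sum_range_succ (fun i j => coeff i (mk f) * coeff j (mk f))]
  simp

theorem coeffsDifferentiable_mk_of_riccati
    (hf : ∀ n, f (n + 1) = deriv (f n) + fun x => a x * ∑ k ∈ range n, f k x * f (n - 1 - k) x)
    (hf0 : Differentiable ℂ (f 0)) (ha : Differentiable ℂ a) : CoeffsDifferentiable (mk f) := by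
  intro n
  rw [coeff_mk]
  induction n using Nat.strong_induction_on with
  | _ n ih =>
  rcases n with _ | n
  · exact hf0
  rw [hf n]
  exact (ih n n.lt_succ_self).deriv.add <| ha.mul <| Differentiable.fun_sum fun k hk =>
    (ih k (by rw [mem_range] at hk; omega)).mul (ih _ (by omega))

end Riccati

end PowerSeries

section PainleveII

variable {φ ψ : ℂ → ℂ} {b d : ℕ → ℂ → ℂ}

theorem riccati_of_add_three_eq (hd : ∀ n : ℕ, d (n + 3) = deriv (d (n + 2)) + fun x =>
      (1 / ψ x) * ∑ k ∈ Finset.Icc 2 (n + 1), d k x * d (n + 3 - k) x) (n : ℕ) :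
    d (n + 1 + 2) = deriv (d (n + 2)) + fun x =>
      (1 / ψ x) * ∑ k ∈ range n, d (k + 2) x * d (n - 1 - k + 2) x := by
  rw [hd n]
  congr 2 with x
  rw [← Ico_add_one_right_eq_Icc, sum_Ico_eq_sum_range, show n + 1 + 1 - 2 = n by omega]
  refine congrArg _ (sum_congr rfl fun k hk => ?_)
  rw [mem_range] at hk
  rw [add_comm 2 k, show n + 3 - (k + 2) = n - 1 - k + 2 by omega]

theorem mk_mul_mk_eq_C_neg_sq (hφ : Differentiable ℂ φ) (hψ : Differentiable ℂ ψ)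
    (hψ0 : ∀ x, ψ x ≠ 0) (hb0 : b 0 = ψ)
    (hb : ∀ n : ℕ, b (n + 1) =
      deriv (b n) + fun x => φ x * ∑ k ∈ Finset.range n, b k x * b (n - 1 - k) x)
    (hd0 : d 0 = fun x => -ψ x) (hd1 : d 1 = deriv ψ)
    (hd2 : d 2 = fun x =>
      (deriv (deriv ψ) x * ψ x - (deriv ψ x) ^ 2 + φ x * (ψ x) ^ 3) / ψ x)
    (hd : ∀ n : ℕ, d (n + 3) = deriv (d (n + 2)) + fun x =>
      (1 / ψ x) * ∑ k ∈ Finset.Icc 2 (n + 1), d k x * d (n + 3 - k) x) :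
    mk b * mk d = C (-ψ ^ 2) := by
  replace hd0 : d 0 = -ψ := hd0
  have hE_rec := riccati_of_add_three_eq hd
  have hB_diff := coeffsDifferentiable_mk_of_riccati hb (hb0 ▸ hψ) hφ
  have hE_diff := coeffsDifferentiable_mk_of_riccati (f := fun n => d (n + 2)) hE_rec
    (hd2 ▸ (((hψ.deriv.deriv.mul hψ).sub (hψ.deriv.pow 2)).add (hφ.mul (hψ.pow 3))).div hψ hψ0)
    ((differentiable_const 1).div hψ hψ0)
  have hD_diff : CoeffsDifferentiable (mk d)
    | 0 => by simpa [hd0] using hψ.neg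
    | 1 => by simpa [hd1] using hψ.deriv
    | n + 2 => by simpa using hE_diff n
  have hinv : C ψ * C (fun x => 1 / ψ x) = 1 := by
    rw [← map_mul, ← map_one C]
    congr 1 with x
    simp [hψ0 x]
  have hd2' : C (d 2) * C ψ = C (deriv (deriv ψ)) * C ψ - C (deriv ψ) ^ 2 + C φ * C ψ ^ 3 := by
    simp only [← map_mul, ← map_pow, ← map_sub, ← map_add]
    congr 1 with x
    simp [hd2, hψ0 x]
  have hD := mk_eq_C_add_X_mul_C_add_X_sq_mul d
  have hD' := mk_eq_C_add_X_mul_C_add_X_sq_mul fun n => deriv (d n)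
  rw [hd0, hd1, map_neg] at hD
  rw [← derivCoeffs_mk, ← derivCoeffs_mk, hd0, hd1,
    show deriv (-ψ) = -deriv ψ from funext fun _ => deriv.neg, map_neg] at hD'
  have hF' : derivCoeffs (mk b * mk d + C (ψ ^ 2)) =
      derivCoeffs (mk b) * mk d + mk b * derivCoeffs (mk d) + 2 * C ψ * C (deriv ψ) := by
    rw [derivCoeffs_add (hB_diff.mul hD_diff) (coeffsDifferentiable_C (hψ.pow 2)),
      derivCoeffs_mul hB_diff hD_diff, derivCoeffs_C, ← map_ofNat C 2, ← map_mul, ← map_mul]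
    congr 2 with x
    simp [deriv_pow, hψ x]
  have hF0 : mk b * mk d + C (ψ ^ 2) = 0 := by
    refine eq_zero_of_C_mul_sub_X_mul_derivCoeffs hψ0
      (N := -C (deriv ψ) + X * PowerSeries.mk (fun n => d (n + 2)) + C φ * C ψ * X * PowerSeries.mk b)
      (by simp [hb0, hd0, sq]) ?_
    rw [hF', map_pow]
    exact riccati_product_identity (hb0 ▸ mk_eq_of_riccati hb) (mk_eq_of_riccati hE_rec)
      hinv hd2' hD hD'
  rw [map_neg]
  linear_combination hF0

end PainleveII

theorem sum_range_mul_eq_of_mk_mul_mk {b d : ℕ → ℂ → ℂ} {ψ : ℂ → ℂ}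
    (h : mk b * mk d = C (-ψ ^ 2)) (x : ℂ) (n : ℕ) :
    ∑ k ∈ range (n + 1), b (n - k) x * d k x = if n = 0 then -ψ x ^ 2 else 0 := by
  have hn := congrFun (congrArg (coeff n) (mul_comm (mk d) (mk b) ▸ h)) x
  rw [coeff_mul, Nat.sum_antidiagonal_eq_sum_range_succ (fun i j => coeff i (mk d) * coeff j (mk b)),
    coeff_C, Finset.sum_apply] at hn
  split_ifs at hn ⊢ <;> simpa [mul_comm] using hn

theorem kappa_eq_tau_div_psi_general
    (φ ψ : ℂ → ℂ) (hφ : Differentiable ℂ φ) (hψ : Differentiable ℂ ψ)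
    (hψ0 : ∀ x : ℂ, ψ x ≠ 0)
    (b : ℕ → ℂ → ℂ)
    (hb0 : b 0 = ψ)
    (hb : ∀ n : ℕ, b (n + 1) =
      deriv (b n) + fun x => φ x * ∑ k ∈ Finset.range n, b k x * b (n - 1 - k) x)
    (τ : ℤ → ℂ → ℂ)
    (hτneg : ∀ N : ℕ, τ (-((N : ℤ) + 1)) =
      fun x => (Matrix.of fun i j : Fin (N + 1) => b (i.1 + j.1) x).det)
    (d : ℕ → ℂ → ℂ)
    (hd0 : d 0 = fun x => -ψ x)
    (hd1 : d 1 = deriv ψ)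
    (hd2 : d 2 = fun x =>
      (deriv (deriv ψ) x * ψ x - (deriv ψ x) ^ 2 + φ x * (ψ x) ^ 3) / ψ x)
    (hd : ∀ n : ℕ, d (n + 3) = deriv (d (n + 2)) + fun x =>
      (1 / ψ x) * ∑ k ∈ Finset.Icc 2 (n + 1), d k x * d (n + 3 - k) x)
    (κ : ℤ → ℂ → ℂ)
    (hκ1 : κ (-1) = 1)
    (hκ : ∀ n : ℕ, 0 < n →
      κ (-(n : ℤ) - 1) = fun x => (Matrix.of fun i j : Fin n => d (i.1 + 1 + (j.1 + 1)) x).det) :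
    ∀ n : ℤ, n ≤ -1 → ∀ x : ℂ, κ n x = τ n x / ψ x := by
  have hconv := sum_range_mul_eq_of_mk_mul_mk
    (mk_mul_mk_eq_C_neg_sq hφ hψ hψ0 hb0 hb hd0 hd1 hd2 hd)
  have hdet (N : ℕ) (x : ℂ) := hankel_det_eq_mul_det_of_conv (b := fun n => b n x)
    (hψ0 x) (by rw [hb0]) (hconv x) N
  intro n hn x
  obtain ⟨N, rfl⟩ : ∃ N : ℕ, n = -((N : ℤ) + 1) := ⟨(-n - 1).toNat, by omega⟩
  rw [hτneg]
  dsimp only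
  rw [hdet]
  rcases N with _ | N
  · simp [hκ1, hψ0 x]
  · rw [show -(((N + 1 : ℕ) : ℤ) + 1) = -((N + 1 : ℕ) : ℤ) - 1 by ring, hκ (N + 1) N.succ_pos]
    field_simp [hψ0 x]

/-- **Proposition 3.4 (negative side).** Under the conditions
`ψ''/ψ = φ''/φ = −2ψφ + 2x` and `φ'ψ − φψ' = 2α`, with `ψ` nowhere vanishing, the
Hankel determinants `κ_{-n-1} = det(d_{i+j})_{1≤i,j≤n}` built from the second formal
Riccati solution coincide, for `n ≤ −1`, with `τ_n/ψ`, where `τ_n` (`n < 0`) are the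
Hankel determinants `det(b_{i+j})` of the Painlevé II tau functions normalized by
`τ₀ = 1`, `τ₋₁ = ψ`. -/
theorem kappa_eq_tau_div_psi
    (α : ℂ) (φ ψ : ℂ → ℂ) (hφ : Differentiable ℂ φ) (hψ : Differentiable ℂ ψ)
    (hψ0 : ∀ x : ℂ, ψ x ≠ 0)
    (hψ'' : ∀ x : ℂ, deriv (deriv ψ) x = (2 * x - 2 * ψ x * φ x) * ψ x)
    (hφ'' : ∀ x : ℂ, deriv (deriv φ) x = (2 * x - 2 * ψ x * φ x) * φ x)
    (hW : ∀ x : ℂ, deriv φ x * ψ x - φ x * deriv ψ x = 2 * α)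
    (b : ℕ → ℂ → ℂ)
    (hb0 : b 0 = ψ)
    (hb : ∀ n : ℕ, b (n + 1) =
      deriv (b n) + fun x => φ x * ∑ k ∈ Finset.range n, b k x * b (n - 1 - k) x)
    (τ : ℤ → ℂ → ℂ)
    (hτ0 : τ 0 = 1)
    (hτneg : ∀ N : ℕ, τ (-((N : ℤ) + 1)) =
      fun x => (Matrix.of fun i j : Fin (N + 1) => b (i.1 + j.1) x).det)
    (hτnz : ∀ m : ℤ, m < 0 → ∀ x : ℂ, τ m x ≠ 0)
    (d : ℕ → ℂ → ℂ)
    (hd0 : d 0 = fun x => -ψ x)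
    (hd1 : d 1 = deriv ψ)
    (hd2 : d 2 = fun x =>
      (deriv (deriv ψ) x * ψ x - (deriv ψ x) ^ 2 + φ x * (ψ x) ^ 3) / ψ x)
    (hd : ∀ n : ℕ, d (n + 3) = deriv (d (n + 2)) + fun x =>
      (1 / ψ x) * ∑ k ∈ Finset.Icc 2 (n + 1), d k x * d (n + 3 - k) x)
    (κ : ℤ → ℂ → ℂ)
    (hκ1 : κ (-1) = 1)
    (hκ : ∀ n : ℕ, 0 < n →
      κ (-(n : ℤ) - 1) = fun x => (Matrix.of fun i j : Fin n => d (i.1 + 1 + (j.1 + 1)) x).det) :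
    ∀ n : ℤ, n ≤ -1 → ∀ x : ℂ, κ n x = τ n x / ψ x :=
  kappa_eq_tau_div_psi_general φ ψ hφ hψ hψ0 b hb0 hb τ hτneg d hd0 hd1 hd2 hd κ hκ1 hκ
end

section
/- Let α ∈ ℂ and let φ, ψ : ℂ → ℂ be entire functions with φ nowhere vanishing, satisfying ψ''(x) = (2x − 2ψ(x)φ(x))·ψ(x), φ''(x) = (2x − 2ψ(x)φ(x))·φ(x), and φ'(x)ψ(x) − φ(x)ψ'(x) = 2α for all x ∈ ℂ. Define a_n by a₀ = φ, a_n = a_{n-1}' + ψ·(∑_{i+j=n-2, i,j≥0} a_i a_j), and the Hankel determinants τ_N = det(a_{i+j})_{0≤i,j≤N-1} for N ≥ 1 (τ₀ = 1); assume τ_m is nowhere vanishing for every m > 0. Define f_n by f₀ = −φ, f₁ = φ', f₂ = (φ''φ − (φ')² + ψφ³)/φ, f_n = f_{n-1}' + (1/φ)·∑_{k=2}^{n-2} f_k f_{n-k} for n ≥ 3, and set θ₁ = 1 and θ_{n+1} = det(f_{i+j})_{1≤i,j≤n} for n ≥ 1. Then for every n ≥ 1 and all x ∈ ℂ: θ_n(x)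 = τ_n(x)/φ(x). -/
/-!
Put `A = ∑ aₙ Xⁿ` and `F = ∑ fₙ Xⁿ`, with `d/dx` acting on coefficients. The two
recursions say that `A` and `F` solve formal Riccati equations, and these combine into the
linear equation `φ X (A F + φ²)' = (A F + φ²) (2φ' X - F - ψ φ X² A)`. The constant term of
the last factor is `-f₀ = φ ≠ 0`, so comparing coefficients forces `A F = -φ²` by induction.

Multiplying the Hankel matrix `(a_{i+j})` on the left by the lower triangular Toeplitz matrix of
`f` then turns its first column into `(-φ², 0, …, 0)`, because `A F` is constant, and its
remaining block into `(f_{i+j})_{i,j ≥ 1}` times an upper triangular Toeplitz matrix of `a`.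
Comparing determinants gives `τₙ₊₁ = φ θₙ₊₁`.
-/

open PowerSeries
open Finset (range mem_range sum_congr sum_add_distrib)

section Series

variable {R : Type*} [Semiring R]

lemma coeff_mk_mul_mk (a f : ℕ → R) (s : ℕ) :
    coeff s (mk a * mk f) = ∑ k ∈ range (s + 1), a k * f (s - k) := by
  rw [coeff_mul, Finset.Nat.sum_antidiagonal_eq_sum_range_succ
    (fun i j => coeff i (mk a) * coeff j (mk f))]
  simp only [coeff_mk]

lemma mk_eq_C_add_C_mul_X_add_X_sq_mul (g : ℕ → R) :
    mk g = C (g 0) + C (g 1) * X + X ^ 2 * mk fun k => g (k + 2) := by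
  ext (_ | _ | n) <;> simp [coeff_X_pow_mul', coeff_C]

end Series

section Hankel

variable {R : Type*} [CommRing R]

lemma sum_fin_ite_val_le (g : ℕ → R) {n : ℕ} (j : Fin n) :
    ∑ m : Fin n, (if m.1 ≤ j.1 then g m else 0) = ∑ m ∈ range (j.1 + 1), g m := by
  rw [Fin.sum_univ_eq_sum_range (fun m => if m ≤ j.1 then g m else 0), ← Finset.sum_filter]
  congr 1
  ext m
  simp only [Finset.mem_filter, mem_range]
  omega

variable {a f : ℕ → R} {c : R}

lemma sum_range_mul_of_mk_mul_mk_eq_C (hfa : mk a * mk f = C c) (s : ℕ) :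
    ∑ k ∈ range (s + 1), a k * f (s - k) = if s = 0 then c else 0 := by
  rw [← coeff_mk_mul_mk, hfa, coeff_C]

lemma sum_range_shift_eq_neg_sum (hfa : mk a * mk f = C c) (i j : ℕ) :
    ∑ u ∈ range (i + 2), f (i + 1 - u) * a (u + (j + 1))
      = -∑ m ∈ range (j + 1), f (i + 1 + (m + 1)) * a (j - m) := by
  have h := sum_range_mul_of_mk_mul_mk_eq_C hfa (i + 1 + (j + 1))
  rw [if_neg (by omega), show i + 1 + (j + 1) + 1 = (j + 1) + (i + 2) by omega,
    Finset.sum_range_add] at h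
  have hlow : ∑ m ∈ range (j + 1), f (i + 1 + (m + 1)) * a (j - m)
      = ∑ k ∈ range (j + 1), a k * f (i + 1 + (j + 1) - k) := by
    rw [← Finset.sum_range_reflect]
    refine sum_congr rfl fun k hk => ?_
    rw [mem_range] at hk
    rw [mul_comm]
    congr 2 <;> omega
  have hhigh : ∑ u ∈ range (i + 2), f (i + 1 - u) * a (u + (j + 1))
      = ∑ u ∈ range (i + 2), a (j + 1 + u) * f (i + 1 + (j + 1) - (j + 1 + u)) :=
    sum_congr rfl fun u _ => by
      rw [mul_comm]
      congr 2 <;> omega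
  rw [hhigh, hlow]
  linear_combination h

theorem pow_mul_det_hankel (hfa : mk a * mk f = C c) (n : ℕ) :
    f 0 ^ (n + 1) * (Matrix.of fun i j : Fin (n + 1) => a (i.1 + j.1)).det
      = c * (-a 0) ^ n * (Matrix.of fun i j : Fin n => f (i.1 + 1 + (j.1 + 1))).det := by
  set L : Matrix (Fin (n + 1)) (Fin (n + 1)) R :=
    .of fun i u => if u.1 ≤ i.1 then f (i - u) else 0
  set W : Matrix (Fin n) (Fin n) R := .of fun m j => if m.1 ≤ j.1 then -a (j - m) else 0
  set N := L * Matrix.of fun i j : Fin (n + 1) => a (i.1 + j.1)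
  have hN (i j : Fin (n + 1)) : N i j = ∑ u ∈ range (i.1 + 1), f (i - u) * a (u + j) := by
    simp only [N, L, Matrix.mul_apply, Matrix.of_apply, ite_mul, zero_mul]
    exact sum_fin_ite_val_le (fun u => f (i - u) * a (u + j)) i
  have hN0 (i : Fin (n + 1)) : N i 0 = if i.1 = 0 then c else 0 := by
    rw [hN, ← sum_range_mul_of_mk_mul_mk_eq_C hfa]
    exact sum_congr rfl fun u _ => by rw [Fin.val_zero, add_zero, mul_comm]
  have hNsucc : N.submatrix Fin.succ Fin.succ
      = (Matrix.of fun i j : Fin n => f (i.1 + 1 + (j.1 + 1))) * W := by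
    ext i j
    simp only [Matrix.submatrix_apply, hN, Matrix.mul_apply, W, Matrix.of_apply, mul_ite,
      mul_zero, Fin.val_succ]
    rw [sum_fin_ite_val_le (fun m => f (i.1 + 1 + (m + 1)) * -a (j - m)) j]
    simp only [mul_neg, Finset.sum_neg_distrib]
    exact sum_range_shift_eq_neg_sum hfa i j
  have hL : L.det = f 0 ^ (n + 1) := by
    rw [Matrix.det_of_isLowerTriangular L fun i j hij => if_neg (not_le.mpr hij)]
    simp [L]
  have hW : W.det = (-a 0) ^ n := by
    rw [Matrix.det_of_isUpperTriangular (M := W) fun i j hij => if_neg (not_le.mpr hij)]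
    simp [W]
  have hNdet : N.det = c * (N.submatrix Fin.succ Fin.succ).det := by
    rw [Matrix.det_succ_column_zero, Finset.sum_eq_single 0
      (fun i _ hi => by simp [hN0, Fin.val_ne_zero_iff.mpr hi]) (by simp)]
    simp [hN0]
  rw [← hL, ← Matrix.det_mul, hNdet, hNsucc, Matrix.det_mul, hW]
  ring

theorem det_hankel_eq_mul_det_hankel [IsDomain R] {p : R} (hp : p ≠ 0) (hf0 : f 0 = -p)
    (hfa : mk a * mk f = C (-p ^ 2)) (n : ℕ) :
    (Matrix.of fun i j : Fin (n + 1) => a (i.1 + j.1)).det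
      = p * (Matrix.of fun i j : Fin n => f (i.1 + 1 + (j.1 + 1))).det := by
  have ha0 : a 0 = p := by
    have h := congrArg (coeff 0) hfa
    rw [coeff_mk_mul_mk, coeff_C, if_pos rfl, Finset.sum_range_one, hf0] at h
    exact mul_right_cancel₀ (neg_ne_zero.mpr hp) (by linear_combination h)
  have h := pow_mul_det_hankel hfa n
  rw [hf0, ha0] at h
  refine mul_left_cancel₀ (pow_ne_zero (n + 1) (neg_ne_zero.mpr hp)) ?_
  linear_combination h

end Hankel

section SeriesDeriv

variable {𝕜 : Type*} [NontriviallyNormedField 𝕜] {P Q : 𝕜 → 𝕜⟦X⟧} {x : 𝕜}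

noncomputable def seriesDeriv (P : 𝕜 → 𝕜⟦X⟧) (x : 𝕜) : 𝕜⟦X⟧ :=
  mk fun n => deriv (fun y => coeff n (P y)) x

lemma coeff_seriesDeriv (n : ℕ) :
    coeff n (seriesDeriv P x) = deriv (fun y => coeff n (P y)) x :=
  coeff_mk _ _

lemma seriesDeriv_mk (s : ℕ → 𝕜 → 𝕜) :
    seriesDeriv (fun y => mk (s · y)) x = mk fun n => deriv (s n) x := by
  ext n
  simp only [coeff_seriesDeriv, coeff_mk]

lemma differentiableAt_coeff_mul (hP : ∀ n, DifferentiableAt 𝕜 (fun y => coeff n (P y)) x)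
    (hQ : ∀ n, DifferentiableAt 𝕜 (fun y => coeff n (Q y)) x) (n : ℕ) :
    DifferentiableAt 𝕜 (fun y => coeff n (P y * Q y)) x := by
  simp only [coeff_mul]
  exact DifferentiableAt.fun_sum fun p _ => (hP _).mul (hQ _)

lemma differentiableAt_coeff_C {u : 𝕜 → 𝕜} (hu : DifferentiableAt 𝕜 u x) (n : ℕ) :
    DifferentiableAt 𝕜 (fun y => coeff n (C (u y))) x := by
  simp only [coeff_C]
  split_ifs
  exacts [hu, differentiableAt_const 0]

lemma seriesDeriv_add (hP : ∀ n, DifferentiableAt 𝕜 (fun y => coeff n (P y)) x)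
    (hQ : ∀ n, DifferentiableAt 𝕜 (fun y => coeff n (Q y)) x) :
    seriesDeriv (fun y => P y + Q y) x = seriesDeriv P x + seriesDeriv Q x := by
  ext n
  simp only [coeff_seriesDeriv, map_add]
  exact deriv_add (hP n) (hQ n)

lemma seriesDeriv_mul (hP : ∀ n, DifferentiableAt 𝕜 (fun y => coeff n (P y)) x)
    (hQ : ∀ n, DifferentiableAt 𝕜 (fun y => coeff n (Q y)) x) :
    seriesDeriv (fun y => P y * Q y) x = seriesDeriv P x * Q x + P x * seriesDeriv Q x := by
  ext n
  simp only [coeff_seriesDeriv, map_add, coeff_mul]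
  rw [deriv_fun_sum (A := fun (p : ℕ × ℕ) y => coeff p.1 (P y) * coeff p.2 (Q y))
    fun p _ => (hP _).mul (hQ _), ← sum_add_distrib]
  exact sum_congr rfl fun p _ => deriv_mul (hP _) (hQ _)

lemma seriesDeriv_C (u : 𝕜 → 𝕜) : seriesDeriv (fun y => C (u y)) x = C (deriv u x) := by
  ext n
  rw [coeff_seriesDeriv, coeff_C]
  simp only [coeff_C]
  split_ifs <;> simp

theorem eq_zero_of_X_mul_seriesDeriv_mul_eq {G H K : 𝕜 → 𝕜⟦X⟧}
    (hH : ∀ x, constantCoeff (H x) ≠ 0) (hG : ∀ x, X * seriesDeriv G x * K x = G x * H x)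
    (x : 𝕜) : G x = 0 := by
  suffices h : ∀ n y, coeff n (G y) = 0 by
    ext n
    simpa using h n x
  intro n
  induction n using Nat.strong_induction_on with
  | _ n ih =>
  intro y
  obtain ⟨Q, hQ⟩ : X ^ n ∣ G y := X_pow_dvd_iff.mpr fun m hm => ih m hm y
  have hG' : X ^ n ∣ seriesDeriv G y := X_pow_dvd_iff.mpr fun m hm => by
    rw [coeff_seriesDeriv, funext (ih m hm), deriv_const]
  have hGH : coeff n (G y * H y) = 0 := by
    refine X_pow_dvd_iff.mp ?_ n (Nat.lt_succ_self n)
    rw [← hG y, pow_succ', mul_assoc X]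
    exact mul_dvd_mul_left X (dvd_mul_of_dvd_left hG' _)
  rw [hQ, mul_assoc, coeff_X_pow_mul', if_pos le_rfl, Nat.sub_self, coeff_zero_eq_constantCoeff,
    map_mul] at hGH
  rw [hQ, coeff_X_pow_mul', if_pos le_rfl, Nat.sub_self, coeff_zero_eq_constantCoeff]
  exact (mul_eq_zero.mp hGH).resolve_right (hH y)

theorem mk_eq_of_riccati_recursion {s : ℕ → 𝕜 → 𝕜} {c : 𝕜 → 𝕜}
    (hs : ∀ n, s (n + 1) =
      deriv (s n) + fun x => c x * ∑ k ∈ range n, s k x * s (n - 1 - k) x)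
    (x : 𝕜) :
    mk (s · x) = C (s 0 x) + X * seriesDeriv (fun y => mk (s · y)) x
      + C (c x) * X ^ 2 * mk (s · x) ^ 2 := by
  ext (_ | n)
  · simp
  rw [coeff_mk, hs n, mul_assoc, map_add, map_add, coeff_C_mul, coeff_X_pow_mul',
    seriesDeriv_mk]
  rcases n with _ | n
  · simp
  simp [coeff_succ_X_mul, sq, coeff_mk_mul_mk]

theorem differentiable_of_riccati_recursion_s16 {s : ℕ → ℂ → ℂ} {c : ℂ → ℂ}
    (h0 : Differentiable ℂ (s 0)) (hc : Differentiable ℂ c)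
    (hs : ∀ n, s (n + 1) =
      deriv (s n) + fun x => c x * ∑ k ∈ range n, s k x * s (n - 1 - k) x)
    (n : ℕ) : Differentiable ℂ (s n) := by
  induction n using Nat.strong_induction_on with
  | _ n ih =>
  rcases n with _ | n
  · exact h0
  rw [hs n]
  refine (ih n n.lt_succ_self).deriv.add (hc.mul (Differentiable.fun_sum fun k hk => ?_))
  rw [mem_range] at hk
  exact (ih k (by omega)).mul (ih _ (by omega))

end SeriesDeriv

section PainleveII

variable {φ ψ : ℂ → ℂ} {a f : ℕ → ℂ → ℂ}

theorem riccati_recursion_tail (hf : ∀ n : ℕ, f (n + 3) = deriv (f (n + 2)) + fun x =>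
      (1 / φ x) * ∑ k ∈ Finset.Icc 2 (n + 1), f k x * f (n + 3 - k) x) (n : ℕ) :
    f (n + 1 + 2) = deriv (f (n + 2)) + fun x =>
      (1 / φ x) * ∑ k ∈ range n, f (k + 2) x * f (n - 1 - k + 2) x := by
  rw [hf n, ← Finset.Ico_add_one_right_eq_Icc]
  congr 2
  funext x
  rw [Finset.sum_Ico_eq_sum_range]
  refine congrArg _ (sum_congr (by simp) fun k hk => ?_)
  rw [mem_range] at hk
  congr 2 <;> omega

theorem differentiable_f (hφ : Differentiable ℂ φ) (hψ : Differentiable ℂ ψ)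
    (hφ0 : ∀ x : ℂ, φ x ≠ 0) (hf0 : f 0 = fun x => -φ x) (hf1 : f 1 = deriv φ)
    (hf2 : f 2 = fun x =>
      (deriv (deriv φ) x * φ x - (deriv φ x) ^ 2 + ψ x * (φ x) ^ 3) / φ x)
    (hf : ∀ n : ℕ, f (n + 3) = deriv (f (n + 2)) + fun x =>
      (1 / φ x) * ∑ k ∈ Finset.Icc 2 (n + 1), f k x * f (n + 3 - k) x) :
    ∀ n, Differentiable ℂ (f n)
  | 0 => hf0 ▸ hφ.neg
  | 1 => hf1 ▸ hφ.deriv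
  | n + 2 => by
    refine differentiable_of_riccati_recursion_s16 (s := fun k => f (k + 2)) ?_
      ((differentiable_const 1).div hφ hφ0) (riccati_recursion_tail hf) n
    rw [hf2]
    exact ((hφ.deriv.deriv.mul hφ).sub (hφ.deriv.pow 2) |>.add (hψ.mul (hφ.pow 3))).div
      hφ hφ0

theorem mk_f_riccati (hφ0 : ∀ x : ℂ, φ x ≠ 0) (hf0 : f 0 = fun x => -φ x)
    (hf1 : f 1 = deriv φ)
    (hf2 : f 2 = fun x =>
      (deriv (deriv φ) x * φ x - (deriv φ x) ^ 2 + ψ x * (φ x) ^ 3) / φ x)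
    (hf : ∀ n : ℕ, f (n + 3) = deriv (f (n + 2)) + fun x =>
      (1 / φ x) * ∑ k ∈ Finset.Icc 2 (n + 1), f k x * f (n + 3 - k) x) (x : ℂ) :
    C (φ x) * mk (f · x) + mk (f · x) ^ 2
      = X * (2 * C (deriv φ x) * mk (f · x) - C (φ x) * seriesDeriv (fun y => mk (f · y)) x)
        - C (ψ x) * C (φ x) ^ 3 * X ^ 2 := by
  have hT :=
    mk_eq_of_riccati_recursion (s := fun k => f (k + 2)) (riccati_recursion_tail hf) x
  rw [seriesDeriv_mk, zero_add] at hT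
  have hF := mk_eq_C_add_C_mul_X_add_X_sq_mul (f · x)
  have hF' := mk_eq_C_add_C_mul_X_add_X_sq_mul (fun n => deriv (f n) x)
  rw [← seriesDeriv_mk] at hF'
  simp only [hf0, hf1, deriv.fun_neg, map_neg] at hF hF'
  have h2 : C (f 2 x) * C (φ x)
      = C (deriv (deriv φ) x) * C (φ x) - C (deriv φ x) ^ 2 + C (ψ x) * C (φ x) ^ 3 := by
    simp only [← map_mul, ← map_pow, ← map_sub, ← map_add, hf2,
      div_mul_cancel₀ _ (hφ0 x)]
  have hinv : C (φ x) * C (1 / φ x) = 1 := by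
    rw [← map_mul, mul_one_div_cancel (hφ0 x), map_one]
  rw [hF', hF]
  linear_combination
    (-C (φ x) * X ^ 2) * hT - X ^ 2 * h2 - X ^ 4 * (mk fun k => f (k + 2) x) ^ 2 * hinv

theorem mk_mul_mk_eq_neg_sq (hφ : Differentiable ℂ φ) (hψ : Differentiable ℂ ψ)
    (hφ0 : ∀ x : ℂ, φ x ≠ 0) (ha0 : a 0 = φ)
    (ha : ∀ n : ℕ, a (n + 1) =
      deriv (a n) + fun x => ψ x * ∑ k ∈ Finset.range n, a k x * a (n - 1 - k) x)
    (hf0 : f 0 = fun x => -φ x) (hf1 : f 1 = deriv φ)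
    (hf2 : f 2 = fun x =>
      (deriv (deriv φ) x * φ x - (deriv φ x) ^ 2 + ψ x * (φ x) ^ 3) / φ x)
    (hf : ∀ n : ℕ, f (n + 3) = deriv (f (n + 2)) + fun x =>
      (1 / φ x) * ∑ k ∈ Finset.Icc 2 (n + 1), f k x * f (n + 3 - k) x) (x : ℂ) :
    mk (a · x) * mk (f · x) = C (-φ x ^ 2) := by
  have hAd (y : ℂ) (n : ℕ) : DifferentiableAt ℂ (fun z => coeff n (mk (a · z))) y := by
    simpa only [coeff_mk] using
      (differentiable_of_riccati_recursion_s16 (ha0 ▸ hφ) hψ ha n).differentiableAt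
  have hFd (y : ℂ) (n : ℕ) : DifferentiableAt ℂ (fun z => coeff n (mk (f · z))) y := by
    simpa only [coeff_mk] using (differentiable_f hφ hψ hφ0 hf0 hf1 hf2 hf n).differentiableAt
  have hG (y : ℂ) :
      X * seriesDeriv (fun z => mk (a · z) * mk (f · z) + C (φ z ^ 2)) y * C (φ y)
        = (mk (a · y) * mk (f · y) + C (φ y ^ 2)) * (2 * C (deriv φ y) * X - mk (f · y)
          - C (ψ y) * C (φ y) * X ^ 2 * mk (a · y)) := by
    have hA := mk_eq_of_riccati_recursion ha y
    rw [ha0] at hA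
    have hF := mk_f_riccati hφ0 hf0 hf1 hf2 hf y
    have hφ2 : deriv (fun z => φ z ^ 2) y = 2 * φ y * deriv φ y := by
      rw [deriv_fun_pow (hφ y) 2]
      ring
    rw [seriesDeriv_add (differentiableAt_coeff_mul (hAd y) (hFd y))
      (differentiableAt_coeff_C (u := fun z => φ z ^ 2) ((hφ y).pow 2)),
      seriesDeriv_mul (hAd y) (hFd y), seriesDeriv_C, hφ2, map_mul, map_mul, map_ofNat, map_pow]
    linear_combination (-C (φ y) * mk (f · y)) * hA + mk (a · y) * hF
  have hH (y : ℂ) : constantCoeff (2 * C (deriv φ y) * X - mk (f · y)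
      - C (ψ y) * C (φ y) * X ^ 2 * mk (a · y)) ≠ 0 := by
    simpa [hf0] using hφ0 y
  rw [map_neg, ← add_eq_zero_iff_eq_neg]
  exact eq_zero_of_X_mul_seriesDeriv_mul_eq hH hG x

end PainleveII

theorem theta_eq_tau_div_phi_general
    (φ ψ : ℂ → ℂ) (hφ : Differentiable ℂ φ) (hψ : Differentiable ℂ ψ)
    (hφ0 : ∀ x : ℂ, φ x ≠ 0)
    (a : ℕ → ℂ → ℂ)
    (ha0 : a 0 = φ)
    (ha : ∀ n : ℕ, a (n + 1) =
      deriv (a n) + fun x => ψ x * ∑ k ∈ Finset.range n, a k x * a (n - 1 - k) x)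
    (τ : ℤ → ℂ → ℂ)
    (hτpos : ∀ N : ℕ, τ ((N : ℤ) + 1) =
      fun x => (Matrix.of fun i j : Fin (N + 1) => a (i.1 + j.1) x).det)
    (f : ℕ → ℂ → ℂ)
    (hf0 : f 0 = fun x => -φ x)
    (hf1 : f 1 = deriv φ)
    (hf2 : f 2 = fun x =>
      (deriv (deriv φ) x * φ x - (deriv φ x) ^ 2 + ψ x * (φ x) ^ 3) / φ x)
    (hf : ∀ n : ℕ, f (n + 3) = deriv (f (n + 2)) + fun x =>
      (1 / φ x) * ∑ k ∈ Finset.Icc 2 (n + 1), f k x * f (n + 3 - k) x)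
    (θ : ℤ → ℂ → ℂ)
    (hθ1 : θ 1 = 1)
    (hθ : ∀ n : ℕ, 0 < n →
      θ ((n : ℤ) + 1) = fun x => (Matrix.of fun i j : Fin n => f (i.1 + 1 + (j.1 + 1)) x).det) :
    ∀ n : ℤ, 1 ≤ n → ∀ x : ℂ, θ n x = τ n x / φ x := by
  intro n hn x
  obtain ⟨N, rfl⟩ : ∃ N : ℕ, n = N + 1 := ⟨(n - 1).toNat, by omega⟩
  rw [hτpos, eq_div_iff (hφ0 x)]
  rcases N with _ | N
  · simp [hθ1, ha0]
  rw [hθ (N + 1) N.succ_pos, mul_comm]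
  exact (det_hankel_eq_mul_det_hankel (hφ0 x) (congrFun hf0 x)
    (mk_mul_mk_eq_neg_sq hφ hψ hφ0 ha0 ha hf0 hf1 hf2 hf x) (N + 1)).symm

/-- **Proposition 3.4 (positive side).** Under the conditions
`ψ''/ψ = φ''/φ = −2ψφ + 2x` and `φ'ψ − φψ' = 2α`, with `φ` nowhere vanishing, the
Hankel determinants `θ_{n+1} = det(f_{i+j})_{1≤i,j≤n}` built from the second formal
Riccati solution coincide, for `n ≥ 1`, with `τ_n/φ`, where `τ_n` (`n > 0`) are the
Hankel determinants `det(a_{i+j})` of the Painlevé II tau functions normalized by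
`τ₀ = 1`, `τ₁ = φ`. -/
theorem theta_eq_tau_div_phi
    (α : ℂ) (φ ψ : ℂ → ℂ) (hφ : Differentiable ℂ φ) (hψ : Differentiable ℂ ψ)
    (hφ0 : ∀ x : ℂ, φ x ≠ 0)
    (hψ'' : ∀ x : ℂ, deriv (deriv ψ) x = (2 * x - 2 * ψ x * φ x) * ψ x)
    (hφ'' : ∀ x : ℂ, deriv (deriv φ) x = (2 * x - 2 * ψ x * φ x) * φ x)
    (hW : ∀ x : ℂ, deriv φ x * ψ x - φ x * deriv ψ x = 2 * α)
    (a : ℕ → ℂ → ℂ)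
    (ha0 : a 0 = φ)
    (ha : ∀ n : ℕ, a (n + 1) =
      deriv (a n) + fun x => ψ x * ∑ k ∈ Finset.range n, a k x * a (n - 1 - k) x)
    (τ : ℤ → ℂ → ℂ)
    (hτ0 : τ 0 = 1)
    (hτpos : ∀ N : ℕ, τ ((N : ℤ) + 1) =
      fun x => (Matrix.of fun i j : Fin (N + 1) => a (i.1 + j.1) x).det)
    (hτnz : ∀ m : ℤ, 0 < m → ∀ x : ℂ, τ m x ≠ 0)
    (f : ℕ → ℂ → ℂ)
    (hf0 : f 0 = fun x => -φ x)
    (hf1 : f 1 = deriv φ)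
    (hf2 : f 2 = fun x =>
      (deriv (deriv φ) x * φ x - (deriv φ x) ^ 2 + ψ x * (φ x) ^ 3) / φ x)
    (hf : ∀ n : ℕ, f (n + 3) = deriv (f (n + 2)) + fun x =>
      (1 / φ x) * ∑ k ∈ Finset.Icc 2 (n + 1), f k x * f (n + 3 - k) x)
    (θ : ℤ → ℂ → ℂ)
    (hθ1 : θ 1 = 1)
    (hθ : ∀ n : ℕ, 0 < n →
      θ ((n : ℤ) + 1) = fun x => (Matrix.of fun i j : Fin n => f (i.1 + 1 + (j.1 + 1)) x).det) :
    ∀ n : ℤ, 1 ≤ n → ∀ x : ℂ, θ n x = τ n x / φ x :=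
  theta_eq_tau_div_phi_general φ ψ hφ hψ hφ0 a ha0 ha τ hτpos f hf0 hf1 hf2 hf θ hθ1 hθ
end

section
/- Let φ, ψ : ℂ → ℂ be entire functions with ψ nowhere vanishing, and let τ_n : ℂ → ℂ (n ∈ ℤ) be entire functions satisfying the Toda equation τ_n''·τ_n − (τ_n')² = τ_{n+1}·τ_{n-1} − φψ·τ_n² for all n ∈ ℤ, with τ₋₁ = ψ. Then the functions τ̃_n := τ_n/ψ satisfy the modified Toda equation τ̃_n''·τ̃_n − (τ̃_n')² = τ̃_{n+1}·τ̃_{n-1} − ((ψ''ψ − (ψ')² + φψ³)/ψ²)·τ̃_n² for all n ∈ ℤ and all x ∈ ℂ. -/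
/-! The quantity `q'' q - (q')² = q² (log q)''` turns quotients into differences:
`(log (f/g))'' = (log f)'' - (log g)''`. With `f = τ_n` and `g = ψ`, dividing
the Toda equation for `τ_n` by `ψ²` gives the one for `τ_n/ψ`, with the extra
`(log ψ)''`-term absorbed into the new potential. -/

section QuotientRule

variable {𝕜 : Type*} [NontriviallyNormedField 𝕜] {f g : 𝕜 → 𝕜}

theorem deriv_div_eq_of_forall_ne_zero (hf : Differentiable 𝕜 f) (hg : Differentiable 𝕜 g)
    (hg0 : ∀ y, g y ≠ 0) :
    deriv (fun y => f y / g y) = fun y => (deriv f y * g y - f y * deriv g y) / g y ^ 2 :=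
  funext fun y => deriv_div (hf y) (hg y) (hg0 y)

theorem deriv_deriv_div (hf : Differentiable 𝕜 f) (hg : Differentiable 𝕜 g)
    (hg0 : ∀ y, g y ≠ 0) {x : 𝕜} (hf' : DifferentiableAt 𝕜 (deriv f) x)
    (hg' : DifferentiableAt 𝕜 (deriv g) x) :
    deriv (deriv fun y => f y / g y) x =
      ((deriv (deriv f) x * g x - f x * deriv (deriv g) x) * g x ^ 2
        - (deriv f x * g x - f x * deriv g x) * (2 * g x * deriv g x)) / (g x ^ 2) ^ 2 := by
  have hnum : deriv (fun y => deriv f y * g y - f y * deriv g y) x =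
      deriv (deriv f) x * g x - f x * deriv (deriv g) x := by
    rw [deriv_fun_sub (hf'.fun_mul (hg x)) ((hf x).fun_mul hg'),
      deriv_fun_mul hf' (hg x), deriv_fun_mul (hf x) hg']
    ring
  have hden : deriv (fun y => g y ^ 2) x = 2 * g x * deriv g x := by
    rw [deriv_fun_pow (hg x) 2]
    ring
  rw [deriv_div_eq_of_forall_ne_zero hf hg hg0,
    deriv_fun_div ((hf'.fun_mul (hg x)).fun_sub ((hf x).fun_mul hg')) ((hg x).fun_pow 2)
      (pow_ne_zero 2 (hg0 x)), hnum, hden]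

theorem deriv_deriv_div_mul_sub_sq (hf : Differentiable 𝕜 f) (hg : Differentiable 𝕜 g)
    (hg0 : ∀ y, g y ≠ 0) {x : 𝕜} (hf' : DifferentiableAt 𝕜 (deriv f) x)
    (hg' : DifferentiableAt 𝕜 (deriv g) x) :
    deriv (deriv fun y => f y / g y) x * (f x / g x) - deriv (fun y => f y / g y) x ^ 2 =
      (deriv (deriv f) x * f x - deriv f x ^ 2) / g x ^ 2
        - (deriv (deriv g) x * g x - deriv g x ^ 2) / g x ^ 2 * (f x / g x) ^ 2 := by
  rw [deriv_deriv_div hf hg hg0 hf' hg', deriv_div_eq_of_forall_ne_zero hf hg hg0]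
  have := hg0 x
  field_simp
  ring

end QuotientRule

theorem renormalized_toda_equation_general
    (φ ψ : ℂ → ℂ) (hψ : Differentiable ℂ ψ)
    (hψ0 : ∀ x : ℂ, ψ x ≠ 0)
    (τ : ℤ → ℂ → ℂ) (hτdiff : ∀ n : ℤ, Differentiable ℂ (τ n))
    (htoda : ∀ (n : ℤ) (x : ℂ),
      deriv (deriv (τ n)) x * τ n x - (deriv (τ n) x) ^ 2 =
        τ (n + 1) x * τ (n - 1) x - φ x * ψ x * (τ n x) ^ 2) :
    ∀ (n : ℤ) (x : ℂ),
      deriv (deriv (fun y => τ n y / ψ y)) x * (τ n x / ψ x)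
          - (deriv (fun y => τ n y / ψ y) x) ^ 2 =
        (τ (n + 1) x / ψ x) * (τ (n - 1) x / ψ x)
          - ((deriv (deriv ψ) x * ψ x - (deriv ψ x) ^ 2 + φ x * (ψ x) ^ 3) / (ψ x) ^ 2)
            * (τ n x / ψ x) ^ 2 := by
  intro n x
  rw [deriv_deriv_div_mul_sub_sq (hτdiff n) hψ hψ0 ((hτdiff n).deriv x) (hψ.deriv x), htoda]
  have := hψ0 x
  field_simp
  ring

/-- **Renormalization of the Toda equation** (step in the proof of Proposition 3.4).
If the entire functions `τ_n` satisfy the Toda equation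
`τ_n'' τ_n − (τ_n')² = τ_{n+1} τ_{n-1} − φψ τ_n²` with `τ₋₁ = ψ` (`ψ` nowhere vanishing),
then `τ̃_n = τ_n/ψ` satisfies
`τ̃_n'' τ̃_n − (τ̃_n')² = τ̃_{n+1} τ̃_{n-1} − ((ψ''ψ − (ψ')² + φψ³)/ψ²) τ̃_n²`. -/
theorem renormalized_toda_equation
    (φ ψ : ℂ → ℂ) (hφ : Differentiable ℂ φ) (hψ : Differentiable ℂ ψ)
    (hψ0 : ∀ x : ℂ, ψ x ≠ 0)
    (τ : ℤ → ℂ → ℂ) (hτdiff : ∀ n : ℤ, Differentiable ℂ (τ n))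
    (hτm1 : τ (-1) = ψ)
    (htoda : ∀ (n : ℤ) (x : ℂ),
      deriv (deriv (τ n)) x * τ n x - (deriv (τ n) x) ^ 2 =
        τ (n + 1) x * τ (n - 1) x - φ x * ψ x * (τ n x) ^ 2) :
    ∀ (n : ℤ) (x : ℂ),
      deriv (deriv (fun y => τ n y / ψ y)) x * (τ n x / ψ x)
          - (deriv (fun y => τ n y / ψ y) x) ^ 2 =
        (τ (n + 1) x / ψ x) * (τ (n - 1) x / ψ x)
          - ((deriv (deriv ψ) x * ψ x - (deriv ψ x) ^ 2 + φ x * (ψ x) ^ 3) / (ψ x) ^ 2)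
            * (τ n x / ψ x) ^ 2 :=
  renormalized_toda_equation_general φ ψ hψ hψ0 τ hτdiff htoda
end

section
/- Let p₀, p₁, p₂, q₀, q₁ ∈ ℂ with p₀ ≠ 0. Then there exists exactly one formal power series F = ∑_{n≥0} c_n s^n ∈ ℂ[[s]] satisfying the equation −2s⁴·dF/ds = −s²(p₁s − p₀)·F² + ((p₂/p₀)s² + 2s³ − 1)·F + q₁·s + q₀ in ℂ[[s]], where dF/ds is the formal derivative. -/
/-!
Moving `-F` to the other side turns the equation into a fixed-point equation `F = Φ F` in which
`F` and `F²` appear with coefficients divisible by `X`, and `F'` with a coefficient divisible by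
`X²`. Since `X · d/dX` preserves divisibility by `Xⁿ`, `F ≡ G mod Xⁿ` implies
`Φ F ≡ Φ G mod Xⁿ⁺¹`: `Φ` is a contraction for the `X`-adic metric, so it has exactly one fixed
point, the `X`-adic limit of its iterates from `0`.
-/

namespace PowerSeries

theorem eq_zero_of_forall_X_pow_dvd {R : Type*} [Semiring R] {H : R⟦X⟧} (h : ∀ n, X ^ n ∣ H) :
    H = 0 := by
  ext m
  exact X_pow_dvd_iff.mp (h (m + 1)) m m.lt_succ_self

theorem X_pow_dvd_X_mul_derivative {R : Type*} [CommSemiring R] {n : ℕ} {H : R⟦X⟧}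
    (h : X ^ n ∣ H) : X ^ n ∣ X * d⁄dX R H := by
  obtain ⟨K, rfl⟩ := h
  rw [Derivation.leibniz, derivative_pow, derivative_X]
  cases n with
  | zero => simp
  | succ m => exact ⟨X * d⁄dX R K + ((m + 1 : ℕ) : R⟦X⟧) * K, by
      simp only [smul_eq_mul, Nat.add_sub_cancel]; ring⟩

variable {R : Type*} [CommRing R]

def IsXAdicContraction (Φ : R⟦X⟧ → R⟦X⟧) : Prop :=
  ∀ F G n, X ^ n ∣ F - G → X ^ (n + 1) ∣ Φ F - Φ G

/-- For a contraction, the `n`-th coefficient of `Φ^[m] 0` no longer changes once `m > n`. -/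
noncomputable def iterateLimit (Φ : R⟦X⟧ → R⟦X⟧) : R⟦X⟧ :=
  mk fun n => coeff n (Φ^[n + 1] 0)

namespace IsXAdicContraction

variable {Φ : R⟦X⟧ → R⟦X⟧}

theorem X_pow_dvd_iterate_succ_sub (hΦ : IsXAdicContraction Φ) (n : ℕ) :
    X ^ n ∣ Φ^[n + 1] 0 - Φ^[n] 0 := by
  induction n with
  | zero => simp
  | succ n ih => simpa only [Function.iterate_succ_apply'] using hΦ _ _ n ih

theorem X_pow_dvd_iterate_sub (hΦ : IsXAdicContraction Φ) {m n : ℕ} (h : n ≤ m) :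
    X ^ n ∣ Φ^[m] 0 - Φ^[n] 0 := by
  induction m, h using Nat.le_induction with
  | base => simp
  | succ m hnm ih =>
    rw [← sub_add_sub_cancel _ (Φ^[m] 0)]
    exact dvd_add ((pow_dvd_pow X hnm).trans (hΦ.X_pow_dvd_iterate_succ_sub m)) ih

theorem X_pow_dvd_iterateLimit_sub (hΦ : IsXAdicContraction Φ) (n : ℕ) :
    X ^ n ∣ iterateLimit Φ - Φ^[n] 0 := by
  refine X_pow_dvd_iff.mpr fun k hk => ?_
  have hk' := X_pow_dvd_iff.mp (hΦ.X_pow_dvd_iterate_sub hk) k k.lt_succ_self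
  rw [map_sub, sub_eq_zero] at hk' ⊢
  rw [iterateLimit, coeff_mk, hk']

theorem iterateLimit_isFixedPt (hΦ : IsXAdicContraction Φ) :
    Φ (iterateLimit Φ) = iterateLimit Φ := by
  refine sub_eq_zero.mp (eq_zero_of_forall_X_pow_dvd fun n => ?_)
  have hΦL := hΦ _ _ n (hΦ.X_pow_dvd_iterateLimit_sub n)
  rw [← Function.iterate_succ_apply' Φ n] at hΦL
  rw [← sub_sub_sub_cancel_right _ _ (Φ^[n + 1] 0)]
  exact (pow_dvd_pow X n.le_succ).trans
    (dvd_sub hΦL (hΦ.X_pow_dvd_iterateLimit_sub (n + 1)))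

theorem eq_of_isFixedPt (hΦ : IsXAdicContraction Φ) {F G : R⟦X⟧} (hF : Φ F = F)
    (hG : Φ G = G) : F = G := by
  refine sub_eq_zero.mp (eq_zero_of_forall_X_pow_dvd fun n => ?_)
  induction n with
  | zero => simp
  | succ n ih => simpa only [hF, hG] using hΦ F G n ih

theorem existsUnique_fixedPoint (hΦ : IsXAdicContraction Φ) : ∃! F, Φ F = F :=
  ⟨iterateLimit Φ, hΦ.iterateLimit_isFixedPt,
    fun _ hG => hΦ.eq_of_isFixedPt hG hΦ.iterateLimit_isFixedPt⟩

end IsXAdicContraction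

noncomputable def riccatiMap (a b c e : R⟦X⟧) (F : R⟦X⟧) : R⟦X⟧ :=
  a + b * F + c * F ^ 2 + X ^ 2 * e * d⁄dX R F

theorem isXAdicContraction_riccatiMap {a b c e : R⟦X⟧} (hb : X ∣ b) (hc : X ∣ c) :
    IsXAdicContraction (riccatiMap a b c e) := by
  intro F G n h
  have hdiff : riccatiMap a b c e F - riccatiMap a b c e G
      = b * (F - G) + c * (F + G) * (F - G) + X * e * (X * d⁄dX R (F - G)) := by
    simp only [riccatiMap, map_sub]
    ring
  rw [hdiff, pow_succ']
  exact dvd_add (dvd_add (mul_dvd_mul hb h) (mul_dvd_mul (hc.mul_right _) h))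
    (mul_dvd_mul (dvd_mul_right X e) (X_pow_dvd_X_mul_derivative h))

end PowerSeries

open PowerSeries in
theorem riccati_formal_solution_existsUnique_general
    (p₀ p₁ p₂ q₀ q₁ : ℂ) :
    ∃! F : PowerSeries ℂ,
      -2 * X ^ 4 * F.derivativeFun =
        -(X ^ 2 * (C p₁ * X - C p₀)) * F ^ 2
          + (C (p₂ / p₀) * X ^ 2 + 2 * X ^ 3 - 1) * F
          + C q₁ * X + C q₀ := by
  have hΦ : IsXAdicContraction (riccatiMap (C q₀ + C q₁ * X) (C (p₂ / p₀) * X ^ 2 + 2 * X ^ 3)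
      (C p₀ * X ^ 2 - C p₁ * X ^ 3) (2 * X ^ 2)) :=
    isXAdicContraction_riccatiMap ⟨C (p₂ / p₀) * X + 2 * X ^ 2, by ring⟩
      ⟨C p₀ * X - C p₁ * X ^ 2, by ring⟩
  refine (existsUnique_congr fun F => ?_).mpr hΦ.existsUnique_fixedPoint
  change -2 * X ^ 4 * d⁄dX ℂ F = _ ↔ _
  rw [riccatiMap]
  constructor <;> intro h <;> linear_combination -h

open PowerSeries in
/-- **Existence and uniqueness of the formal power-series Riccati solution**
(Ramis–Hsieh–Sibuya, applied in Section 4). The Riccati equation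
`2t∂ₜF = −(p₁ − tp₀)F² + ((p₂/p₀)t + 2 − t³)F + t²(q₁ + tq₀)`, rewritten in `s = t^{-1}`
as `−2s⁴ dF/ds = −s²(p₁s − p₀)F² + ((p₂/p₀)s² + 2s³ − 1)F + q₁s + q₀`,
has exactly one formal power-series solution `F = ∑ c_n sⁿ ∈ ℂ⟦s⟧`. -/
theorem riccati_formal_solution_existsUnique
    (p₀ p₁ p₂ q₀ q₁ : ℂ) (hp₀ : p₀ ≠ 0) :
    ∃! F : PowerSeries ℂ,
      -2 * X ^ 4 * F.derivativeFun =
        -(X ^ 2 * (C p₁ * X - C p₀)) * F ^ 2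
          + (C (p₂ / p₀) * X ^ 2 + 2 * X ^ 3 - 1) * F
          + C q₁ * X + C q₀ :=
  riccati_formal_solution_existsUnique_general p₀ p₁ p₂ q₀ q₁
end
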